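/- arXiv:2108.03616 — 7 statements merged into one kernel-verified Lean document; each statement's English description precedes it below -/
import Mathlib

section
/- Every vector z in a linear subspace W of R^n admits a conformal circuit decomposition: z can be written as a sum of at most n elementary vectors g^1,...,g^h of W, each of which conforms to z (i.e., z_i g^k_i > 0 whenever g^k_i ≠ 0). -/
open Finset

variable {ι : Type*} [Fintype ι] [DecidableEq ι]

/-- `y` conforms to `x` if `x i * y i > 0` whenever `y i ≠ 0`. -/
def Conforms (y x : ι → ℝ) : Prop := ∀ i, y i ≠ 0 → x i * y i > 0

/-- An elementary vector of `W`: a support-minimal nonzero vector of `W`. -/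
def IsElementary (W : Submodule ℝ (ι → ℝ)) (g : ι → ℝ) : Prop :=
  g ∈ W ∧ g ≠ 0 ∧
    ∀ h ∈ W, h ≠ 0 → {i | h i ≠ 0} ⊆ {i | g i ≠ 0} → {i | h i ≠ 0} = {i | g i ≠ 0}

/-- The fractional circuit imbalance measure `κ_W`. -/
noncomputable def kappa (W : Submodule ℝ (ι → ℝ)) : ℝ :=
  sSup ({1} ∪ {t : ℝ | ∃ g : ι → ℝ, IsElementary W g ∧
    ∃ i j, g i ≠ 0 ∧ g j ≠ 0 ∧ t = |g j| / |g i|})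

/-- An integer elementary vector, normalized so that the gcd of its entries is 1. -/
def IsIntElementary (W : Submodule ℝ (ι → ℝ)) (g : ι → ℤ) : Prop :=
  IsElementary W (fun i => (g i : ℝ)) ∧ Finset.univ.gcd (fun i => (g i).natAbs) = 1

/-- The max-circuit imbalance measure `κ̄_W`. -/
noncomputable def barKappa (W : Submodule ℝ (ι → ℝ)) : ℕ :=
  sSup {k : ℕ | ∃ g : ι → ℤ, IsIntElementary W g ∧
    k = Finset.univ.sup fun i => (g i).natAbs}

/-- The lcm-circuit imbalance measure `κ̇_W`: the least positive integer divisible by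
every entry of every normalized integer elementary vector. -/
noncomputable def dotKappa (W : Submodule ℝ (ι → ℝ)) : ℕ :=
  sInf {k : ℕ | 0 < k ∧ ∀ g : ι → ℤ, IsIntElementary W g → ∀ i, g i ≠ 0 → (g i).natAbs ∣ k}

/-- A rational linear subspace: one spanned by rational vectors. -/
def IsRationalSubspace (W : Submodule ℝ (ι → ℝ)) : Prop :=
  ∃ S : Set (ι → ℚ), W = Submodule.span ℝ ((fun v : ι → ℚ => fun i => ((v i : ℝ))) '' S)

/-- The orthogonal complement of `W` in `ℝ^ι` with the standard inner product. -/
def orthComp (W : Submodule ℝ (ι → ℝ)) : Submodule ℝ (ι → ℝ) where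
  carrier := {v | ∀ w ∈ W, ∑ i, v i * w i = 0}
  add_mem' := by
    intro a b ha hb w hw
    have := ha w hw
    have := hb w hw
    simp only [Set.mem_setOf_eq, Pi.add_apply, add_mul, Finset.sum_add_distrib, *]
    ring
  zero_mem' := by intro w hw; simp
  smul_mem' := by
    intro c a ha w hw
    have h := ha w hw
    simp only [Set.mem_setOf_eq, Pi.smul_apply, smul_eq_mul, mul_assoc, ← Finset.mul_sum, h,
      mul_zero]

/-!
Start from a conformal vector of `W` (e.g. `z` itself) and shrink its support: if `v` is not
elementary, some `h ∈ W` has strictly smaller support, and moving from `v` along `h` until the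
first coordinate vanishes keeps every coordinate on its side of zero. This yields an elementary
vector `g` conforming to `z`. The same move from `z` along `g` gives `z = t • g + z'` with `t > 0`
and `z'` conforming to `z` with strictly smaller support, so induction on the size of the support
produces at most `|supp z| ≤ n` terms.
-/

open Function

theorem mul_sub_pos_of_abs_le {a b : ℝ} (hba : |b| ≤ |a|) (hab : a - b ≠ 0) :
    0 < a * (a - b) := by
  have ha : a ≠ 0 := by
    rintro rfl
    exact hab (by simpa using hba)
  have hb : a * b ≤ a * a := by
    nlinarith [abs_mul_abs_self a, le_abs_self (a * b), abs_mul a b, abs_nonneg a]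
  exact (by nlinarith : 0 ≤ a * (a - b)).lt_of_ne' (mul_ne_zero ha hab)

section

variable {α : Type*} {x y z : α → ℝ}

namespace Conforms

theorem refl (x : α → ℝ) : Conforms x x := fun _ hi => mul_self_pos.mpr hi

theorem support_subset (h : Conforms y x) : support y ⊆ support x :=
  fun i hi => left_ne_zero_of_mul (h i hi).ne'

theorem trans (hyx : Conforms y x) (hxz : Conforms x z) : Conforms y z := by
  intro i hi
  have hxy := hyx i hi
  have hzx := hxz i (left_ne_zero_of_mul hxy.ne')
  nlinarith [mul_pos hzx hxy, mul_self_pos.mpr (left_ne_zero_of_mul hxy.ne')]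

theorem smul_of_pos (h : Conforms y x) {c : ℝ} (hc : 0 < c) : Conforms (c • y) x := by
  intro i hi
  have hyi : y i ≠ 0 := right_ne_zero_of_mul hi
  simpa [mul_left_comm] using mul_pos hc (h i hyi)

theorem ncard_support_lt [Finite α] (h : Conforms y x) {i : α} (hy : y i = 0) (hx : x i ≠ 0) :
    (support y).ncard < (support x).ncard :=
  Set.ncard_lt_ncard ((Set.ssubset_iff_of_subset h.support_subset).mpr ⟨i, hx, fun hi => hi hy⟩)
    (Set.toFinite _)

end Conforms

theorem sub_div_smul_apply_self (v : α → ℝ) {h : α → ℝ} {i : α} (hi : h i ≠ 0) :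
    (v - (v i / h i) • h) i = 0 := by
  simp [div_mul_cancel₀ _ hi]

/-- Choosing `i` to minimise `|v i / h i|` makes `v - (v i / h i) • h` vanish at `i` without
changing the sign of any other coordinate. -/
theorem exists_conforms_sub_div_smul [Finite α] (v h : α → ℝ) (h0 : h ≠ 0) :
    ∃ i, h i ≠ 0 ∧ Conforms (v - (v i / h i) • h) v := by
  have : Fintype α := Fintype.ofFinite α
  obtain ⟨i, hi, hmin⟩ := (Finset.univ.filter (h · ≠ 0)).exists_min_image (fun i => |v i / h i|)
    (by simpa [Finset.filter_nonempty_iff, Function.ne_iff] using h0)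
  refine ⟨i, (Finset.mem_filter.mp hi).2, fun j hj => ?_⟩
  simp only [Pi.sub_apply, Pi.smul_apply, smul_eq_mul] at hj ⊢
  by_cases hhj : h j = 0
  · simp only [hhj, mul_zero, sub_zero] at hj ⊢
    exact mul_self_pos.mpr hj
  refine mul_sub_pos_of_abs_le ?_ hj
  calc |v i / h i * h j| = |v i / h i| * |h j| := abs_mul _ _
    _ ≤ |v j / h j| * |h j| := mul_le_mul_of_nonneg_right (hmin j (by simp [hhj])) (abs_nonneg _)
    _ = |v j| := by rw [abs_div, div_mul_cancel₀ _ (abs_ne_zero.mpr hhj)]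

theorem IsElementary.smul {W : Submodule ℝ (α → ℝ)} {g : α → ℝ} (hg : IsElementary W g)
    {c : ℝ} (hc : c ≠ 0) : IsElementary W (c • g) := by
  obtain ⟨hgW, hg0, hmin⟩ := hg
  refine ⟨W.smul_mem c hgW, smul_ne_zero hc hg0, fun h hW h0 hsub => ?_⟩
  change support h ⊆ support (c • g) at hsub
  change support h = support (c • g)
  rw [support_const_smul_of_ne_zero c g hc] at hsub ⊢
  exact hmin h hW h0 hsub

theorem exists_isElementary_conforms [Finite α] {W : Submodule ℝ (α → ℝ)} {v : α → ℝ}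
    (hvW : v ∈ W) (hv0 : v ≠ 0) (hvz : Conforms v z) : ∃ g, IsElementary W g ∧ Conforms g z := by
  by_cases hv : IsElementary W v
  · exact ⟨v, hv, hvz⟩
  obtain ⟨h, hW, h0, hsub, hne⟩ :
      ∃ h ∈ W, h ≠ 0 ∧ support h ⊆ support v ∧ support h ≠ support v := by
    by_contra! hmin
    exact hv ⟨hvW, hv0, hmin⟩
  obtain ⟨j, hjv, hjh⟩ := Set.exists_of_ssubset (hsub.ssubset_of_ne hne)
  obtain ⟨i, hi, hconf⟩ := exists_conforms_sub_div_smul v h h0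
  have hv'0 : v - (v i / h i) • h ≠ 0 := fun hv' =>
    hjv (by simpa [notMem_support.mp hjh] using congr_fun hv' j)
  have := hconf.ncard_support_lt (sub_div_smul_apply_self v hi) (hsub hi)
  exact exists_isElementary_conforms (W.sub_mem hvW (W.smul_mem _ hW)) hv'0 (hconf.trans hvz)
termination_by (support v).ncard

theorem exists_conformal_decomposition [Finite α] {W : Submodule ℝ (α → ℝ)} {z : α → ℝ}
    (hz : z ∈ W) :
    ∃ (m : ℕ) (g : Fin m → α → ℝ), m ≤ (support z).ncard ∧
      (∀ k, IsElementary W (g k) ∧ Conforms (g k) z) ∧ z = ∑ k, g k := by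
  by_cases hz0 : z = 0
  · exact ⟨0, Fin.elim0, Nat.zero_le _, fun k => k.elim0, by simp [hz0]⟩
  obtain ⟨g, hg, hgz⟩ := exists_isElementary_conforms hz hz0 (Conforms.refl z)
  obtain ⟨i, hi, hconf⟩ := exists_conforms_sub_div_smul z g hg.2.1
  have ht : 0 < z i / g i := by
    rw [← mul_div_mul_right (z i) (g i) hi]
    exact div_pos (hgz i hi) (mul_self_pos.mpr hi)
  have := hconf.ncard_support_lt (sub_div_smul_apply_self z hi) (hgz.support_subset hi)
  obtain ⟨m, g', hm, hg', hsum⟩ :=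
    exists_conformal_decomposition (W.sub_mem hz (W.smul_mem (z i / g i) hg.1))
  refine ⟨m + 1, Fin.cons ((z i / g i) • g) g', by omega, fun k => ?_, ?_⟩
  · refine Fin.cases ?_ (fun k => ?_) k
    · exact ⟨hg.smul ht.ne', hgz.smul_of_pos ht⟩
    · exact ⟨(hg' k).1, (hg' k).2.trans hconf⟩
  · rw [Fin.sum_cons, ← hsum, add_sub_cancel]
termination_by (support z).ncard

end

/-- every `z ∈ W` admits a conformal circuit decomposition into at most `n`
elementary vectors, each conformal with `z`. -/
theorem conformal_circuit_decomposition {n : ℕ} (W : Submodule ℝ (Fin n → ℝ))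
    (z : Fin n → ℝ) (hz : z ∈ W) :
    ∃ (h : ℕ) (g : Fin h → (Fin n → ℝ)), h ≤ n ∧
      (∀ k, IsElementary W (g k) ∧ Conforms (g k) z) ∧ z = ∑ k, g k := by
  obtain ⟨m, g, hm, hg, hsum⟩ := exists_conformal_decomposition hz
  refine ⟨m, g, hm.trans ?_, hg, hsum⟩
  simpa using Set.ncard_le_card (support z)
end

section
/- For every integer matrix A ∈ Z^{m×n}, the max-circuit imbalance κ̄_A is at most Δ_A, the maximum absolute value of a determinant of a nonsingular square submatrix of A. -/
open Finset

variable {ι : Type*} [Fintype ι] [DecidableEq ι]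

/-- `Δ_A`: the maximum absolute value of the determinant of a nonsingular square
submatrix of `A`. -/
noncomputable def Delta {m n : ℕ} (A : Matrix (Fin m) (Fin n) ℤ) : ℕ :=
  sSup {d : ℕ | ∃ (k : ℕ) (r : Fin k → Fin m) (c : Fin k → Fin n),
    Function.Injective r ∧ Function.Injective c ∧ (A.submatrix r c).det ≠ 0 ∧
    d = (A.submatrix r c).det.natAbs}

/-! Fix `i₀` in the support `S` of a normalized integer elementary vector `g` of `ker A`.
Minimality of `S` makes the columns of `A` indexed by `S \ {i₀}` linearly independent, so they
contain a nonsingular square submatrix `N = A[R, S \ {i₀}]`. Cramer's rule gives an integer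
solution `x` of `A[R, S] x = 0` with `x i₀ = det N`; since `N` is nonsingular, the solutions of
this system supported on `S` form a line, so `det N • g = g i₀ • x`. The entries of `g` are
coprime, hence `g i₀ ∣ det N` and `|g i₀| ≤ |det N| ≤ Δ_A`. -/

open Function Matrix

namespace Matrix

variable {R κ o n : Type*} [Fintype o] [Fintype n]

theorem mulVec_eq_submatrix_mulVec_comp [NonUnitalNonAssocSemiring R] (M : Matrix κ n R)
    {c : o → n} (hc : Injective c) {v : n → R} (hv : ∀ i ∉ Set.range c, v i = 0) :
    M *ᵥ v = M.submatrix id c *ᵥ (v ∘ c) := by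
  funext t
  exact (Fintype.sum_of_injective c hc _ _ (fun i hi => by simp [hv i hi]) fun _ => rfl).symm

theorem exists_submatrix_det_ne_zero_of_linearIndependent_col [Field R] [Fintype κ] {k : ℕ}
    (M : Matrix κ (Fin k) R) (hM : LinearIndependent R M.col) :
    ∃ r : Fin k → κ, Injective r ∧ (M.submatrix r id).det ≠ 0 := by
  obtain ⟨ρ, a, ha, hspan, hli⟩ := exists_linearIndependent' R M.row
  have : Fintype ρ := Fintype.ofInjective a ha
  have hcard : Fintype.card ρ = k := by
    rw [← finrank_span_eq_card hli, hspan, ← rank_eq_finrank_span_row,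
      rank_eq_finrank_span_cols, finrank_span_eq_card hM, Fintype.card_fin]
  obtain e := (Fintype.equivFinOfCardEq hcard).symm
  refine ⟨a ∘ e, ha.comp e.injective, fun hdet => ?_⟩
  have hrows : LinearIndependent R (M.submatrix (a ∘ e) id).row := hli.comp e e.injective
  exact ((isUnit_iff_isUnit_det _).mp (linearIndependent_rows_iff_isUnit.mp hrows)).ne_zero hdet

variable [Fintype κ] [DecidableEq κ]

theorem exists_mulVec_eq_zero_and_apply_eq_det [CommRing R] [DecidableEq n] (M : Matrix κ n R)
    {c : κ → n} (hc : Injective c) {i₀ : n} (hi₀ : i₀ ∉ Set.range c) :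
    ∃ x : n → R, M *ᵥ x = 0 ∧ x i₀ = (M.submatrix id c).det ∧
      ∀ i, i ≠ i₀ → i ∉ Set.range c → x i = 0 := by
  set N := M.submatrix id c
  set y := extend c (N.cramer (-M.col i₀)) 0
  have hy : ∀ i ∉ Set.range c, y i = 0 := fun i hi => by
    simp [y, extend_apply' _ _ _ (by simpa using hi)]
  refine ⟨Pi.single i₀ N.det + y, ?_, by simp [hy i₀ hi₀], fun i hi hic => by simp [hy i hic, hi]⟩
  rw [mulVec_add, M.mulVec_eq_submatrix_mulVec_comp hc hy, extend_comp hc, mulVec_cramer,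
    mulVec_single]
  ext t
  simp [N, mul_comm]

theorem smul_eq_smul_of_mulVec_eq_zero [CommRing R] [NoZeroDivisors R] (M : Matrix κ n R)
    {c : κ → n} (hc : Injective c) (hdet : (M.submatrix id c).det ≠ 0) {i₀ : n} {u v : n → R}
    (hu : M *ᵥ u = 0) (hv : M *ᵥ v = 0) (hu₀ : ∀ i, i ≠ i₀ → i ∉ Set.range c → u i = 0)
    (hv₀ : ∀ i, i ≠ i₀ → i ∉ Set.range c → v i = 0) :
    u i₀ • v = v i₀ • u := by
  set z := u i₀ • v - v i₀ • u
  have hz : ∀ i ∉ Set.range c, z i = 0 := fun i hic => by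
    by_cases hi : i = i₀
    · simp [z, hi, mul_comm]
    · simp [z, hu₀ i hi hic, hv₀ i hi hic]
  have hzc : z ∘ c = 0 := by
    refine eq_zero_of_mulVec_eq_zero hdet ?_
    rw [← M.mulVec_eq_submatrix_mulVec_comp hc hz]
    simp [z, mulVec_sub, mulVec_smul, hu, hv]
  refine sub_eq_zero.mp (funext fun i => ?_)
  by_cases hic : i ∈ Set.range c
  · obtain ⟨l, rfl⟩ := hic
    exact congrFun hzc l
  · exact hz i hic

end Matrix

theorem IsElementary.eq_zero_of_support_subset {α : Type*} {W : Submodule ℝ (α → ℝ)}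
    {g h : α → ℝ} (hg : IsElementary W g) (hh : h ∈ W) (hsupp : ∀ i, h i ≠ 0 → g i ≠ 0) {i₀ : α}
    (hg₀ : g i₀ ≠ 0) (hh₀ : h i₀ = 0) : h = 0 := by
  by_contra hne
  have heq := hg.2.2 h hh hne hsupp
  exact (heq.symm ▸ hg₀ : i₀ ∈ {i | h i ≠ 0}) hh₀

theorem IsElementary.linearIndependent_submatrix_col {κ n o : Type*} [Fintype n] [Fintype o]
    {M : Matrix κ n ℝ} {g : n → ℝ} (hg : IsElementary (LinearMap.ker M.mulVecLin) g)
    {c : o → n} (hc : Injective c) (hsupp : ∀ l, g (c l) ≠ 0) {i₀ : n} (hg₀ : g i₀ ≠ 0)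
    (hi₀ : i₀ ∉ Set.range c) : LinearIndependent ℝ (M.submatrix id c).col := by
  refine mulVec_injective_iff.mp <|
    (injective_iff_map_eq_zero (M.submatrix id c).mulVecLin).mpr fun w hw => ?_
  have hext : ∀ i ∉ Set.range c, extend c w 0 i = 0 := fun i hi => by
    simp [extend_apply' _ _ _ (by simpa using hi)]
  have hker : extend c w 0 ∈ LinearMap.ker M.mulVecLin := by
    rw [LinearMap.mem_ker, mulVecLin_apply, M.mulVec_eq_submatrix_mulVec_comp hc hext,
      extend_comp hc]
    exact hw
  have hsub : ∀ i, extend c w 0 i ≠ 0 → g i ≠ 0 := fun i hi => by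
    obtain ⟨l, rfl⟩ := not_not.mp fun hic => hi (hext i hic)
    exact hsupp l
  have := hg.eq_zero_of_support_subset hker hsub hg₀ (hext i₀ hi₀)
  funext l
  simpa [hc.extend_apply] using congrFun this (c l)

theorem Int.dvd_of_forall_dvd_mul_of_gcd_natAbs_eq_one {α : Type*} [Fintype α] {g : α → ℤ}
    (hg : Finset.univ.gcd (fun i => (g i).natAbs) = 1) {a b : ℤ} (h : ∀ i, a ∣ b * g i) :
    a ∣ b := by
  have hdvd : a.natAbs ∣ Finset.univ.gcd (fun i => b.natAbs * (g i).natAbs) :=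
    Finset.dvd_gcd fun i _ => by simpa [Int.natAbs_mul] using Int.natAbs_dvd_natAbs.mpr (h i)
  rw [Finset.gcd_mul_left, hg, normalize_eq, mul_one] at hdvd
  exact Int.natAbs_dvd_natAbs.mp hdvd

theorem natAbs_det_le_Delta {m n k : ℕ} (A : Matrix (Fin m) (Fin n) ℤ) {r : Fin k → Fin m}
    {c : Fin k → Fin n} (hr : Injective r) (hc : Injective c)
    (hdet : (A.submatrix r c).det ≠ 0) : (A.submatrix r c).det.natAbs ≤ Delta A := by
  refine le_csSup (Set.Finite.bddAbove ?_) ⟨k, r, c, hr, hc, hdet, rfl⟩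
  refine ((Finset.range (m + 1)).finite_toSet.biUnion fun k _ => Set.finite_range
    fun rc : (Fin k → Fin m) × (Fin k → Fin n) => (A.submatrix rc.1 rc.2).det.natAbs).subset ?_
  rintro _ ⟨k, r, c, hr, -, -, rfl⟩
  have hk : k ≤ m := by simpa using Fintype.card_le_of_injective r hr
  exact Set.mem_biUnion (by simpa [Nat.lt_succ_iff] using hk) ⟨(r, c), rfl⟩

theorem natAbs_le_Delta_of_isIntElementary {m n : ℕ} (A : Matrix (Fin m) (Fin n) ℤ)
    {g : Fin n → ℤ} (hg : IsIntElementary (LinearMap.ker ((A.map (Int.cast : ℤ → ℝ)).mulVecLin)) g)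
    (i₀ : Fin n) : (g i₀).natAbs ≤ Delta A := by
  obtain ⟨hgel, hgcd⟩ := hg
  by_cases hg₀ : g i₀ = 0
  · simp [hg₀]
  set T := (Finset.univ.filter (g · ≠ 0)).erase i₀
  set c : Fin T.card → Fin n := ⇑(T.orderEmbOfFin rfl)
  have hc : Injective c := (T.orderEmbOfFin rfl).injective
  have hrange : Set.range c = T := T.range_orderEmbOfFin rfl
  have hi₀c : i₀ ∉ Set.range c := by simp [hrange, T]
  have hg_supp : ∀ i, i ≠ i₀ → i ∉ Set.range c → g i = 0 := fun i hi hic => by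
    simpa [hrange, T, hi] using hic
  have hcols : LinearIndependent ℝ ((A.map (Int.cast : ℤ → ℝ)).submatrix id c).col := by
    refine hgel.linearIndependent_submatrix_col hc (fun l => ?_) (by exact_mod_cast hg₀) hi₀c
    have hl : c l ∈ (T : Set (Fin n)) := hrange ▸ Set.mem_range_self l
    exact_mod_cast (Finset.mem_filter.mp (Finset.mem_of_mem_erase hl)).2
  obtain ⟨r, hr, hdetℝ⟩ := exists_submatrix_det_ne_zero_of_linearIndependent_col _ hcols
  have hdet : (A.submatrix r c).det ≠ 0 := fun h => hdetℝ <| by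
    rw [show ((A.map Int.cast).submatrix id c).submatrix r id
        = (Int.castRingHom ℝ).mapMatrix (A.submatrix r c) from rfl, ← RingHom.map_det, h,
      map_zero]
  have hAg : A.submatrix r id *ᵥ g = 0 := by
    have hreal : A.map (Int.cast : ℤ → ℝ) *ᵥ (Int.cast ∘ g) = 0 := hgel.1
    funext t
    show (A *ᵥ g) (r t) = 0
    simpa using (RingHom.map_mulVec (Int.castRingHom ℝ) A g (r t)).trans (congrFun hreal (r t))
  obtain ⟨x, hx, hx₀, hx_supp⟩ := (A.submatrix r id).exists_mulVec_eq_zero_and_apply_eq_det hc hi₀c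
  have hprop := (A.submatrix r id).smul_eq_smul_of_mulVec_eq_zero hc hdet hx hAg hx_supp hg_supp
  have hdvd : g i₀ ∣ (A.submatrix r c).det :=
    Int.dvd_of_forall_dvd_mul_of_gcd_natAbs_eq_one hgcd fun i =>
      ⟨x i, by simpa [hx₀, mul_comm] using congrFun hprop i⟩
  calc (g i₀).natAbs ≤ (A.submatrix r c).det.natAbs := Int.natAbs_le_of_dvd_ne_zero hdvd hdet
    _ ≤ Delta A := natAbs_det_le_Delta A hr hc hdet

/-- `κ̄_A ≤ Δ_A` for every integer matrix `A`. -/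
theorem barKappa_le_Delta {m n : ℕ} (A : Matrix (Fin m) (Fin n) ℤ) :
    barKappa (LinearMap.ker ((A.map (Int.cast : ℤ → ℝ)).mulVecLin)) ≤ Delta A := by
  refine csSup_le' ?_
  rintro _ ⟨g, hg, rfl⟩
  exact Finset.sup_le fun i _ => natAbs_le_Delta_of_isIntElementary A hg i
end

section
/- Let A = (I_m | A') ∈ R^{m×n} be a matrix in basis form. Then for any nonsingular square submatrix M of A, every nonzero entry of M^{-1} has absolute value between 1/κ_A and κ_A. -/
open Finset

variable {ι : Type*} [Fintype ι] [DecidableEq ι]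

/-!
Let `N = M⁻¹` for `M = A[r, c]`. If the unit column `e_{r j}` occurs among the columns `c`,
the `j`-th column of `N` is a unit vector. Otherwise the columns `c` together with the unit
columns of the rows missed by `r` are linearly independent, and `e_{r j}` is a combination of
them with coefficients `N p j` at `c p`. This yields the fundamental circuit `g` of `e_{r j}`:
it is elementary, `g (e_{r j}) = 1` and `g (c p) = -N p j`, so
`|N i j| = |g (c i)| / |g (e_{r j})|` lies between `1 / κ` and `κ`.
-/

open Matrix Function

section Elementary

variable {α : Type*} {W : Submodule ℝ (α → ℝ)}

lemma IsElementary.eq_smul_of_support_subset {g h : α → ℝ} (hg : IsElementary W g)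
    (hh : h ∈ W) (hsupp : {x | h x ≠ 0} ⊆ {x | g x ≠ 0}) {i : α} (hi : g i ≠ 0) :
    h = (h i / g i) • g := by
  set d := h - (h i / g i) • g
  have hdi : d i = 0 := by simp [d, hi]
  by_contra hne
  have hdsupp : {x | d x ≠ 0} ⊆ {x | g x ≠ 0} := by
    intro x hx hgx
    have hhx : h x = 0 := not_not.mp fun hhx => hsupp hhx hgx
    simp [d, hgx, hhx] at hx
  have hdW : d ∈ W := W.sub_mem hh (W.smul_mem _ hg.1)
  have hsupp_eq := hg.2.2 d hdW (sub_ne_zero.mpr hne) hdsupp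
  exact (hsupp_eq ▸ hi : i ∈ {x | d x ≠ 0}) hdi

lemma isElementary_of_support_subset_insert {S : Set α}
    (hS : ∀ h ∈ W, (∀ x ∉ S, h x = 0) → h = 0) {g : α → ℝ} (hgW : g ∈ W) {e : α}
    (he : g e ≠ 0) (hsupp : {x | g x ≠ 0} ⊆ insert e S) : IsElementary W g := by
  refine ⟨hgW, fun hg0 => he (by simp [hg0]), fun h hhW hh0 hhsupp => ?_⟩
  set d := h - (h e / g e) • g
  have hd : d = 0 := by
    refine hS d (W.sub_mem hhW (W.smul_mem _ hgW)) fun x hx => ?_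
    by_cases hxe : x = e
    · simp [d, hxe, he]
    · have hgx : g x = 0 := not_not.mp fun hgx => hx ((hsupp hgx).resolve_left hxe)
      have hhx : h x = 0 := not_not.mp fun hhx => hhsupp hhx hgx
      simp [d, hgx, hhx]
  obtain ⟨a, ha, rfl⟩ : ∃ a ≠ 0, h = a • g :=
    ⟨h e / g e, fun h0 => hh0 (by simpa [d, h0, sub_eq_zero] using hd), sub_eq_zero.mp hd⟩
  ext x
  simp [ha]

lemma IsElementary.abs_div_eq_of_support_eq {g g' : α → ℝ} (hg : IsElementary W g)
    (hg' : IsElementary W g') (hsupp : {x | g' x ≠ 0} = {x | g x ≠ 0}) {i j : α}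
    (hi : g i ≠ 0) : |g' j| / |g' i| = |g j| / |g i| := by
  have hg'i : g' i ≠ 0 := (hsupp ▸ hi : i ∈ {x | g' x ≠ 0})
  rw [hg.eq_smul_of_support_subset hg'.1 hsupp.le hi]
  simp only [Pi.smul_apply, smul_eq_mul, abs_mul]
  exact mul_div_mul_left _ _ (abs_ne_zero.mpr (div_ne_zero hg'i hi))

end Elementary

section Kappa

variable {α : Type*} [Finite α] {W : Submodule ℝ (α → ℝ)}

lemma finite_kappa_ratios (W : Submodule ℝ (α → ℝ)) :
    {t : ℝ | ∃ g : α → ℝ, IsElementary W g ∧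
      ∃ i j, g i ≠ 0 ∧ g j ≠ 0 ∧ t = |g j| / |g i|}.Finite := by
  refine (Set.finite_iUnion fun p : Set α × α × α => Set.Subsingleton.finite
    (s := {t | ∃ g, IsElementary W g ∧ {x | g x ≠ 0} = p.1 ∧ g p.2.1 ≠ 0 ∧
      t = |g p.2.2| / |g p.2.1|}) ?_).subset ?_
  · rintro _ ⟨g, hg, hs, hi, rfl⟩ _ ⟨g', hg', hs', -, rfl⟩
    exact (hg.abs_div_eq_of_support_eq hg' (hs'.trans hs.symm) hi).symm
  · rintro t ⟨g, hg, i, j, hi, -, rfl⟩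
    exact Set.mem_iUnion.mpr ⟨⟨_, i, j⟩, g, hg, rfl, hi, rfl⟩

lemma bddAbove_kappa_set (W : Submodule ℝ (α → ℝ)) :
    BddAbove ({1} ∪ {t : ℝ | ∃ g : α → ℝ, IsElementary W g ∧
      ∃ i j, g i ≠ 0 ∧ g j ≠ 0 ∧ t = |g j| / |g i|}) :=
  ((Set.finite_singleton 1).union (finite_kappa_ratios W)).bddAbove

lemma one_le_kappa (W : Submodule ℝ (α → ℝ)) : 1 ≤ kappa W :=
  le_csSup (bddAbove_kappa_set W) (Set.mem_union_left _ rfl)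

lemma IsElementary.abs_div_le_kappa {g : α → ℝ} (hg : IsElementary W g) {i j : α}
    (hi : g i ≠ 0) (hj : g j ≠ 0) : |g j| / |g i| ≤ kappa W :=
  le_csSup (bddAbove_kappa_set W) (Set.mem_union_right _ ⟨g, hg, i, j, hi, hj, rfl⟩)

lemma IsElementary.one_div_kappa_le_abs_div {g : α → ℝ} (hg : IsElementary W g) {i j : α}
    (hi : g i ≠ 0) (hj : g j ≠ 0) : 1 / kappa W ≤ |g j| / |g i| := by
  rw [one_div_le (by linarith [one_le_kappa W]) (by positivity), one_div_div]
  exact hg.abs_div_le_kappa hj hi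

end Kappa

lemma Matrix.mulVec_apply_eq_sum_comp_of_injective {R β o m : Type*} [Fintype β] [Fintype o]
    [NonUnitalNonAssocSemiring R] (A : Matrix m β R) {c : o → β} (hc : Injective c)
    {v : β → R} {i : m} (hv : ∀ x ∉ Set.range c, A i x * v x = 0) :
    (A *ᵥ v) i = ∑ p, A i (c p) * v (c p) :=
  (Fintype.sum_of_injective c hc _ _ hv fun _ => rfl).symm

lemma Matrix.inv_apply_of_col_eq_single {K o : Type*} [Field K] [Fintype o] [DecidableEq o]
    {M : Matrix o o K} (hdet : M.det ≠ 0) {p j : o} (hcol : ∀ q, M q p = if q = j then 1 else 0)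
    (i : o) : M⁻¹ i j = if i = p then 1 else 0 := by
  have h := congrFun (congrFun (nonsing_inv_mul M hdet.isUnit) i) p
  simpa [mul_apply, one_apply, hcol] using h

section BasisForm

variable {R m n o : Type*} [DecidableEq m] [Fintype o] [DecidableEq o] {A : Matrix m (m ⊕ n) R}

lemma mulVec_eq_of_basisForm [Semiring R] [Fintype m] [Fintype n]
    (hbasis : ∀ i j : m, A i (Sum.inl j) = if i = j then 1 else 0) (v : m ⊕ n → R) :
    A *ᵥ v = v ∘ Sum.inl + A.toCols₂ *ᵥ (v ∘ Sum.inr) := by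
  have h₁ : A.toCols₁ = 1 := by ext i j; simp [toCols₁_apply, hbasis, one_apply]
  conv_lhs => rw [← fromCols_toCols A, fromCols_mulVec, h₁, one_mulVec]

lemma mulVec_sumElim_zero_of_basisForm [Semiring R] [Fintype m] [Fintype n]
    (hbasis : ∀ i j : m, A i (Sum.inl j) = if i = j then 1 else 0) (w : m → R) :
    A *ᵥ Sum.elim w 0 = w := by
  simp [mulVec_eq_of_basisForm hbasis]

lemma mem_range_of_submatrix_col_eq_inl [CommRing R]
    (hbasis : ∀ i j : m, A i (Sum.inl j) = if i = j then 1 else 0)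
    {r : o → m} {c : o → m ⊕ n}
    (hdet : (A.submatrix r c).det ≠ 0) {p : o} {i : m} (hp : c p = Sum.inl i) :
    i ∈ Set.range r := by
  by_contra hi
  refine hdet (det_eq_zero_of_column_eq_zero p fun q => ?_)
  rw [submatrix_apply, hp, hbasis, if_neg fun h => hi ⟨q, h⟩]

lemma eq_zero_of_mulVec_eq_zero_of_basisForm [Field R] [Fintype m] [Fintype n]
    (hbasis : ∀ i j : m, A i (Sum.inl j) = if i = j then 1 else 0)
    {r : o → m} {c : o → m ⊕ n}
    (hc : Injective c) (hdet : (A.submatrix r c).det ≠ 0) {v : m ⊕ n → R} (hv : A *ᵥ v = 0)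
    (hsupp : ∀ x ∉ Set.range c ∪ Sum.inl '' (Set.range r)ᶜ, v x = 0) : v = 0 := by
  have hrow_zero (q : o) : ∀ x ∉ Set.range c, A (r q) x * v x = 0 := by
    intro x hx
    by_cases hvx : v x = 0
    · simp [hvx]
    obtain ⟨i, hi, rfl⟩ : x ∈ Sum.inl '' (Set.range r)ᶜ := by
      by_contra h; exact hvx (hsupp x (by simp [hx, h]))
    rw [hbasis, if_neg fun h => hi ⟨q, h⟩, zero_mul]
  have hvc : v ∘ c = 0 := by
    refine eq_zero_of_mulVec_eq_zero hdet (funext fun q => ?_)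
    have hrow := congrFun hv (r q)
    rwa [A.mulVec_apply_eq_sum_comp_of_injective hc (hrow_zero q)] at hrow
  have hvinr : v ∘ Sum.inr = 0 := by
    funext b
    by_cases hb : Sum.inr b ∈ Set.range c
    · obtain ⟨p, hp⟩ := hb
      simpa [hp] using congrFun hvc p
    · exact hsupp _ (by simp [hb])
  have hvinl : v ∘ Sum.inl = 0 := by
    simpa [mulVec_eq_of_basisForm hbasis, hvinr] using hv
  funext x
  cases x with
  | inl i => exact congrFun hvinl i
  | inr b => exact congrFun hvinr b

end BasisForm

lemma exists_isElementary_ker_of_inv_col {m n o : Type*} [Fintype m] [DecidableEq m] [Fintype n]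
    [Fintype o] [DecidableEq o] {A : Matrix m (m ⊕ n) ℝ}
    (hbasis : ∀ i j : m, A i (Sum.inl j) = if i = j then 1 else 0) {r : o → m}
    {c : o → m ⊕ n} (hc : Injective c) (hdet : (A.submatrix r c).det ≠ 0)
    {j : o} (hj : Sum.inl (r j) ∉ Set.range c) :
    ∃ g, IsElementary (LinearMap.ker A.mulVecLin) g ∧ g (Sum.inl (r j)) = 1 ∧
      ∀ p, g (c p) = -(A.submatrix r c)⁻¹ p j := by
  set N := (A.submatrix r c)⁻¹
  set y := extend c (fun p => N p j) 0
  have hyc (p : o) : y (c p) = N p j := hc.extend_apply _ _ p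
  have hy_notMem {x} (hx : x ∉ Set.range c) : y x = 0 := extend_apply' _ _ x hx
  have hAy (q : o) : (A *ᵥ y) (r q) = if q = j then 1 else 0 := calc
    (A *ᵥ y) (r q) = (A.submatrix r c * N) q j := by
      rw [A.mulVec_apply_eq_sum_comp_of_injective hc fun x hx => by simp [hy_notMem hx],
        mul_apply]
      simp [hyc]
    _ = if q = j then 1 else 0 := by rw [mul_nonsing_inv _ hdet.isUnit, one_apply]
  -- `g ∈ ker A` because `A` acts as the identity on vectors supported on the unit columns.
  set g : m ⊕ n → ℝ := Sum.elim (A *ᵥ y) 0 - y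
  have hge : g (Sum.inl (r j)) = 1 := by simp [g, hAy, hy_notMem hj]
  have hgc (p : o) : g (c p) = -N p j := by
    have hAy_c : Sum.elim (A *ᵥ y) 0 (c p) = 0 := by
      rcases hcp : c p with i | b
      · obtain ⟨q, rfl⟩ := mem_range_of_submatrix_col_eq_inl hbasis hdet hcp
        have hqj : q ≠ j := fun h => hj ⟨p, h ▸ hcp⟩
        simp [hAy, hqj]
      · rfl
    simp [g, hAy_c, hyc]
  have hgW : g ∈ LinearMap.ker A.mulVecLin := by
    simp [g, mulVec_sub, mulVec_sumElim_zero_of_basisForm hbasis]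
  have hgsupp : {x | g x ≠ 0} ⊆
      insert (Sum.inl (r j)) (Set.range c ∪ Sum.inl '' (Set.range r)ᶜ) := by
    intro x hx
    by_cases hxc : x ∈ Set.range c
    · exact Or.inr (Or.inl hxc)
    rcases x with i | b
    · by_cases hi : i ∈ Set.range r
      · obtain ⟨q, rfl⟩ := hi
        obtain rfl : q = j := by
          by_contra hqj
          simp [g, hAy, hqj, hy_notMem hxc] at hx
        exact Or.inl rfl
      · exact Or.inr (Or.inr ⟨i, hi, rfl⟩)
    · simp [g, hy_notMem hxc] at hx
  refine ⟨g, isElementary_of_support_subset_insert (fun v hv => ?_) hgW (by simp [hge]) hgsupp,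
    hge, hgc⟩
  exact eq_zero_of_mulVec_eq_zero_of_basisForm hbasis hc hdet (by simpa using hv)

/-- for a matrix `A = (I_m | A')` in basis form, every nonzero entry of the
inverse of any nonsingular square submatrix `M` of `A` has absolute value between
`1/κ_A` and `κ_A`. -/
theorem inv_submatrix_entries_bounds {m n' : ℕ} (A : Matrix (Fin m) (Fin m ⊕ Fin n') ℝ)
    (hbasis : ∀ i j : Fin m, A i (Sum.inl j) = if i = j then 1 else 0)
    {k : ℕ} (r : Fin k → Fin m) (c : Fin k → Fin m ⊕ Fin n')
    (hr : Function.Injective r) (hc : Function.Injective c)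
    (hdet : (A.submatrix r c).det ≠ 0) (i j : Fin k)
    (hne : (A.submatrix r c)⁻¹ i j ≠ 0) :
    1 / kappa (LinearMap.ker A.mulVecLin) ≤ |(A.submatrix r c)⁻¹ i j| ∧
      |(A.submatrix r c)⁻¹ i j| ≤ kappa (LinearMap.ker A.mulVecLin) := by
  have hκ := one_le_kappa (LinearMap.ker A.mulVecLin)
  by_cases hj : Sum.inl (r j) ∈ Set.range c
  · obtain ⟨p, hp⟩ := hj
    have hcol (q : Fin k) : A.submatrix r c q p = if q = j then 1 else 0 := by
      simp [hp, hbasis, hr.eq_iff]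
    rw [inv_apply_of_col_eq_single hdet hcol] at hne ⊢
    obtain rfl : i = p := by_contra fun hip => hne (if_neg hip)
    rw [if_pos rfl, abs_one]
    exact ⟨by rwa [div_le_one (by linarith)], hκ⟩
  · obtain ⟨g, hg, hge, hgc⟩ := exists_isElementary_ker_of_inv_col hbasis hc hdet hj
    have hge0 : g (Sum.inl (r j)) ≠ 0 := by simp [hge]
    have hgi : g (c i) ≠ 0 := by simpa [hgc] using hne
    have hlower := hg.one_div_kappa_le_abs_div hge0 hgi
    have hupper := hg.abs_div_le_kappa hge0 hgi
    rw [hge, hgc, abs_neg, abs_one, div_one] at hlower hupper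
    exact ⟨hlower, hupper⟩
end

section
/- Let W ⊂ R^n be a linear subspace with κ_W = 1, and let A be any matrix in basis form (i.e., containing an identity submatrix on some basis of columns) with W = ker(A). Then A is totally unimodular. -/
open Finset

variable {ι : Type*} [Fintype ι] [DecidableEq ι]

/-- A totally unimodular matrix: every square subdeterminant is `0`, `1` or `-1`. -/
def IsTU {m n : ℕ} (A : Matrix (Fin m) (Fin n) ℝ) : Prop :=
  ∀ (k : ℕ) (r : Fin k → Fin m) (c : Fin k → Fin n),
    (A.submatrix r c).det = 0 ∨ (A.submatrix r c).det = 1 ∨ (A.submatrix r c).det = -1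

/-!
When `κ_W = 1`, all nonzero entries of an elementary vector of `W` have the same absolute value.
If `A` is in basis form for `b` and `j` is not a basic column, the fundamental circuit
`e_j - ∑ᵢ A i j • e_{b i}` is an elementary vector of `ker A` whose entries are `1` and the
`-A i j`, so every entry of `A` lies in `{0, 1, -1}`. For a nonsingular column submatrix
`B = A[:, c]`, the matrix `B⁻¹ * A` has the same kernel and is in basis form for `c`, so it too
has entries in `{0, 1, -1}`; its columns at `b` form `B⁻¹`. Hence `B` and `B⁻¹` are both integral
and `det B = ±1`. Finally, completing a square submatrix on rows `f` by the unit columns `b i`,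
`i ∉ range f`, gives a block-triangular column submatrix of `A` with the same determinant.
-/

section CircuitImbalance

variable {n : Type*} {W : Submodule ℝ (n → ℝ)}

lemma abs_eq_abs_of_kappa_eq_one (hk : kappa W = 1) {g : n → ℝ} (hg : IsElementary W g)
    {i j : n} (hi : g i ≠ 0) (hj : g j ≠ 0) : |g i| = |g j| := by
  have hbdd : BddAbove ({1} ∪ {t : ℝ | ∃ g : n → ℝ, IsElementary W g ∧
      ∃ i j, g i ≠ 0 ∧ g j ≠ 0 ∧ t = |g j| / |g i|}) := by
    by_contra h
    rw [kappa, Real.sSup_of_not_bddAbove h] at hk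
    exact zero_ne_one hk
  have hle : ∀ {i j}, g i ≠ 0 → g j ≠ 0 → |g j| / |g i| ≤ 1 := fun hi hj =>
    (le_csSup hbdd (Or.inr ⟨g, hg, _, _, hi, hj, rfl⟩)).trans_eq hk
  exact le_antisymm ((div_le_one (abs_pos.2 hj)).1 (hle hj hi))
    ((div_le_one (abs_pos.2 hi)).1 (hle hi hj))

lemma isElementary_of_forall_eq_smul {g : n → ℝ} (hgW : g ∈ W) (hg : g ≠ 0)
    (hmul : ∀ h ∈ W, {i | h i ≠ 0} ⊆ {i | g i ≠ 0} → ∃ c : ℝ, h = c • g) :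
    IsElementary W g := by
  refine ⟨hgW, hg, fun h hhW hh hsupp => ?_⟩
  obtain ⟨c, rfl⟩ := hmul h hhW hsupp
  have hc : c ≠ 0 := by
    rintro rfl
    exact hh (zero_smul ℝ g)
  ext i
  simp [hc]

end CircuitImbalance

namespace Matrix

section BasisForm

variable {m n R : Type*} [DecidableEq m] [CommRing R] {A : Matrix m n R} {b : m → n}

lemma injective_of_submatrix_id_eq_one [Nontrivial R] (hA : A.submatrix id b = 1) :
    b.Injective := by
  intro i j hij
  by_contra hne
  have h1 : A i (b i) = 1 := by simpa using congrFun₂ hA i i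
  have h0 : A i (b j) = 0 := by simpa [hne] using congrFun₂ hA i j
  rw [hij] at h1
  exact one_ne_zero (h1.symm.trans h0)

variable [Fintype m]

lemma mulVec_eq_comp_of_submatrix_id_eq_one [Fintype n] [Nontrivial R]
    (hA : A.submatrix id b = 1) {h : n → R} (hh : ∀ p ∉ Set.range b, h p = 0) :
    A *ᵥ h = h ∘ b := by
  funext r
  rw [mulVec, dotProduct, ← Fintype.sum_of_injective b (injective_of_submatrix_id_eq_one hA)
    (fun i => A r (b i) * h (b i)) _ (fun p hp => by rw [hh p hp, mul_zero]) fun _ => rfl]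
  have hAb : ∀ i, A r (b i) = (1 : Matrix m m R) r i := congrFun₂ hA r
  simp only [hAb, one_apply, ite_mul, one_mul, zero_mul, Finset.sum_ite_eq, Finset.mem_univ,
    if_true, Function.comp_apply]

lemma eq_zero_of_mulVec_eq_zero_of_submatrix_id_eq_one [Fintype n] [Nontrivial R]
    (hA : A.submatrix id b = 1) {h : n → R} (hh : ∀ p ∉ Set.range b, h p = 0)
    (hker : A *ᵥ h = 0) : h = 0 := by
  funext p
  by_cases hp : p ∈ Set.range b
  · obtain ⟨i, rfl⟩ := hp
    exact congrFun ((mulVec_eq_comp_of_submatrix_id_eq_one hA hh).symm.trans hker) i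
  · exact hh p hp

lemma exists_det_submatrix_eq_det_submatrix_id [DecidableEq n] (hA : A.submatrix id b = 1)
    {k : ℕ} {f : Fin k → m} (hf : f.Injective) (g : Fin k → n) :
    ∃ c : m → n, (A.submatrix f g).det = (A.submatrix id c).det := by
  let e := Equiv.ofInjective f hf
  let c : m → n := fun i => if h : i ∈ Set.range f then g (e.symm ⟨i, h⟩) else b i
  have hc : ∀ i, i ∉ Set.range f → c i = b i := fun i hi => dif_neg hi
  refine ⟨c, ?_⟩
  have hid : (A.submatrix id c).toSquareBlockProp (· ∉ Set.range f) = 1 := by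
    ext ⟨i, hi⟩ ⟨j, hj⟩
    simp only [toSquareBlockProp, toBlock_apply, submatrix_apply, id, hc j hj, one_apply,
      Subtype.mk.injEq]
    exact congrFun₂ hA i j
  have hblock : ((A.submatrix id c).toSquareBlockProp (· ∈ Set.range f)).submatrix e e =
      A.submatrix f g := by
    ext s t
    simp [toSquareBlockProp, toBlock, c, e]
  have hzero : ∀ i ∈ Set.range f, ∀ j ∉ Set.range f, A.submatrix id c i j = 0 := by
    intro i hi j hj
    have hij : i ≠ j := fun h => hj (h ▸ hi)
    simpa [hc j hj, hij] using congrFun₂ hA i j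
  rw [twoBlockTriangular_det' _ _ hzero, hid, det_one, mul_one, ← hblock]
  convert det_submatrix_equiv_self e _

lemma isTotallyUnimodular_of_forall_det_submatrix_id [DecidableEq n]
    (hA : A.submatrix id b = 1)
    (h : ∀ c : m → n, (A.submatrix id c).det ∈ Set.range SignType.cast) :
    A.IsTotallyUnimodular := fun _ _ g hf _ => by
  obtain ⟨c, hc⟩ := exists_det_submatrix_eq_det_submatrix_id hA hf g
  exact hc ▸ h c

end BasisForm

section FundamentalCircuit

variable {m n : Type*} [DecidableEq n] {A : Matrix m n ℝ} {b : m → n}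

noncomputable def fundamentalCircuit (A : Matrix m n ℝ) (b : m → n) (j : n) : n → ℝ :=
  Pi.single j 1 - Function.extend b (A.col j) 0

lemma fundamentalCircuit_apply_self {j : n} (hj : j ∉ Set.range b) :
    fundamentalCircuit A b j j = 1 := by
  simp [fundamentalCircuit, Function.extend_apply' _ _ _ hj]

lemma fundamentalCircuit_apply_of_ne {j p : n} (hpj : p ≠ j) (hp : p ∉ Set.range b) :
    fundamentalCircuit A b j p = 0 := by
  simp [fundamentalCircuit, hpj, Function.extend_apply' _ _ _ hp]

variable [DecidableEq m]

lemma fundamentalCircuit_apply_comp (hA : A.submatrix id b = 1) {j : n}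
    (hj : j ∉ Set.range b) (i : m) : fundamentalCircuit A b j (b i) = -A i j := by
  have hij : b i ≠ j := fun h => hj ⟨i, h⟩
  simp [fundamentalCircuit, hij, (injective_of_submatrix_id_eq_one hA).extend_apply]

variable [Fintype m] [Fintype n]

lemma mulVec_fundamentalCircuit (hA : A.submatrix id b = 1) (j : n) :
    A *ᵥ fundamentalCircuit A b j = 0 := by
  have hb := injective_of_submatrix_id_eq_one hA
  rw [fundamentalCircuit, mulVec_sub, mulVec_single_one,
    mulVec_eq_comp_of_submatrix_id_eq_one (h := Function.extend b (A.col j) 0) hA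
      fun p hp => Function.extend_apply' _ _ p hp,
    Function.extend_comp hb, sub_self]

lemma isElementary_fundamentalCircuit (hA : A.submatrix id b = 1) {j : n}
    (hj : j ∉ Set.range b) :
    IsElementary (LinearMap.ker A.mulVecLin) (fundamentalCircuit A b j) := by
  set g := fundamentalCircuit A b j
  refine isElementary_of_forall_eq_smul (mulVec_fundamentalCircuit hA j)
    (fun h => by simpa [g, fundamentalCircuit_apply_self hj] using congrFun h j)
    fun h hker hsupp => ⟨h j, (sub_eq_zero.1 ?_)⟩
  refine eq_zero_of_mulVec_eq_zero_of_submatrix_id_eq_one hA (fun p hp => ?_) ?_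
  · by_cases hpj : p = j
    · simp [hpj, g, fundamentalCircuit_apply_self hj]
    · have hgp : g p = 0 := fundamentalCircuit_apply_of_ne hpj hp
      have hhp : h p = 0 := not_not.1 fun hne => hsupp hne hgp
      simp [hgp, hhp]
  · rw [mulVec_sub, mulVec_smul, mulVec_fundamentalCircuit hA, smul_zero, sub_zero]
    exact hker

lemma apply_mem_range_signType_cast_of_kappa_eq_one
    (hk : kappa (LinearMap.ker A.mulVecLin) = 1) (hA : A.submatrix id b = 1) (i : m) (j : n) :
    A i j ∈ Set.range SignType.cast := by
  by_cases hj : j ∈ Set.range b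
  · obtain ⟨i', rfl⟩ := hj
    rw [show A i (b i') = (1 : Matrix m m ℝ) i i' from congrFun₂ hA i i', one_apply]
    split_ifs
    exacts [⟨1, SignType.coe_one⟩, ⟨0, SignType.coe_zero⟩]
  by_cases hij : A i j = 0
  · exact ⟨0, hij ▸ SignType.coe_zero⟩
  have habs := abs_eq_abs_of_kappa_eq_one hk (isElementary_fundamentalCircuit hA hj)
    (i := b i) (j := j) (by simpa [fundamentalCircuit_apply_comp hA hj] using hij)
    (by simp [fundamentalCircuit_apply_self hj])
  rw [fundamentalCircuit_apply_comp hA hj, fundamentalCircuit_apply_self hj, abs_neg,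
    abs_one, abs_eq zero_le_one] at habs
  rcases habs with h | h
  exacts [⟨1, h ▸ SignType.coe_one⟩, ⟨-1, h ▸ SignType.coe_neg_one⟩]

end FundamentalCircuit

section Integral

variable {m R : Type*} [Fintype m] [DecidableEq m] [CommRing R] {B : Matrix m m R}

lemma det_mem_range_intCast (hB : ∀ i j, B i j ∈ Set.range ((↑) : ℤ → R)) :
    B.det ∈ Set.range ((↑) : ℤ → R) := by
  choose Z hZ using hB
  have hBZ : (Int.castRingHom R).mapMatrix (of Z) = B := ext hZ
  exact ⟨(of Z).det, hBZ ▸ RingHom.map_det (Int.castRingHom R) (of Z)⟩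

lemma det_eq_one_or_neg_one_of_forall_mem_range_intCast [CharZero R] (hdet : IsUnit B.det)
    (hB : ∀ i j, B i j ∈ Set.range ((↑) : ℤ → R))
    (hB' : ∀ i j, B⁻¹ i j ∈ Set.range ((↑) : ℤ → R)) : B.det = 1 ∨ B.det = -1 := by
  obtain ⟨u, hu⟩ := det_mem_range_intCast hB
  obtain ⟨v, hv⟩ := det_mem_range_intCast hB'
  have huv : u * v = 1 := by
    have h := det_nonsing_inv_mul_det _ hdet
    rw [← hu, ← hv, mul_comm] at h
    exact_mod_cast h
  rcases Int.eq_one_or_neg_one_of_mul_eq_one huv with rfl | rfl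
  · exact Or.inl (by simp [← hu])
  · exact Or.inr (by simp [← hu])

end Integral

lemma ker_mulVecLin_mul_of_isUnit {m n K : Type*} [Fintype m] [DecidableEq m] [Fintype n]
    [Field K] {C : Matrix m m K} (hC : IsUnit C) (A : Matrix m n K) :
    LinearMap.ker (C * A).mulVecLin = LinearMap.ker A.mulVecLin := by
  rw [mulVecLin_mul, LinearMap.ker_comp_of_ker_eq_bot _
    (LinearMap.ker_eq_bot.2 (mulVec_injective_iff_isUnit.2 hC))]

section KappaOne

variable {m n : Type*} [Fintype m] [DecidableEq m] [Fintype n] [DecidableEq n]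
  {A : Matrix m n ℝ} {b : m → n}

lemma det_submatrix_id_mem_of_kappa_eq_one (hk : kappa (LinearMap.ker A.mulVecLin) = 1)
    (hA : A.submatrix id b = 1) (c : m → n) :
    (A.submatrix id c).det ∈ Set.range SignType.cast := by
  set B := A.submatrix id c
  by_cases hdet : IsUnit B.det
  swap
  · exact ⟨0, by simpa [eq_comm] using hdet⟩
  have hint : ∀ {M : Matrix m n ℝ} {d : m → n}, kappa (LinearMap.ker M.mulVecLin) = 1 →
      M.submatrix id d = 1 → ∀ i j, M i j ∈ Set.range ((↑) : ℤ → ℝ) := fun hkM hM i j => by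
    obtain ⟨s, hs⟩ := apply_mem_range_signType_cast_of_kappa_eq_one hkM hM i j
    exact ⟨s, by simp [← hs]⟩
  have hk' : kappa (LinearMap.ker (B⁻¹ * A).mulVecLin) = 1 := by
    have hBinvUnit : IsUnit B⁻¹ := isUnit_nonsing_inv_iff.2 ((isUnit_iff_isUnit_det B).2 hdet)
    rwa [ker_mulVecLin_mul_of_isUnit hBinvUnit]
  have hA' : (B⁻¹ * A).submatrix id c = 1 := by
    rw [submatrix_mul _ _ _ id _ Function.bijective_id, submatrix_id_id]
    exact nonsing_inv_mul B hdet
  have hBinv : (B⁻¹ * A).submatrix id b = B⁻¹ := by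
    rw [submatrix_mul _ _ _ id _ Function.bijective_id, hA, submatrix_id_id, mul_one]
  rcases det_eq_one_or_neg_one_of_forall_mem_range_intCast hdet (fun i j => hint hk hA i (c j))
    (fun i j => congrFun₂ hBinv i j ▸ hint hk' hA' i (b j)) with h | h
  exacts [⟨1, h ▸ SignType.coe_one⟩, ⟨-1, h ▸ SignType.coe_neg_one⟩]

lemma isTotallyUnimodular_of_kappa_eq_one (hk : kappa (LinearMap.ker A.mulVecLin) = 1)
    (hA : A.submatrix id b = 1) : A.IsTotallyUnimodular :=
  isTotallyUnimodular_of_forall_det_submatrix_id hA (det_submatrix_id_mem_of_kappa_eq_one hk hA)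

end KappaOne

end Matrix

theorem basis_form_TU_of_kappa_eq_one_general {m n : ℕ} (W : Submodule ℝ (Fin n → ℝ))
    (hk : kappa W = 1) (A : Matrix (Fin m) (Fin n) ℝ)
    (hker : LinearMap.ker A.mulVecLin = W)
    (b : Fin m → Fin n)
    (hbasis : ∀ i j : Fin m, A i (b j) = if i = j then 1 else 0) :
    IsTU A := by
  subst hker
  have hA : A.submatrix id b = 1 :=
    Matrix.ext fun i j => (hbasis i j).trans Matrix.one_apply.symm
  intro k r c
  obtain ⟨s, hs⟩ := (Matrix.isTotallyUnimodular_iff A).1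
    (Matrix.isTotallyUnimodular_of_kappa_eq_one hk hA) k r c
  rw [← hs]
  cases s <;> simp

/-- if `κ_W = 1` then any matrix in basis form with kernel `W` is TU. -/
theorem basis_form_TU_of_kappa_eq_one {m n : ℕ} (W : Submodule ℝ (Fin n → ℝ))
    (hk : kappa W = 1) (A : Matrix (Fin m) (Fin n) ℝ)
    (hker : LinearMap.ker A.mulVecLin = W)
    (b : Fin m → Fin n) (hb : Function.Injective b)
    (hbasis : ∀ i j : Fin m, A i (b j) = if i = j then 1 else 0) :
    IsTU A :=
  basis_form_TU_of_kappa_eq_one_general W hk A hker b hbasis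
end

section
/- Let W ⊆ R^n be a rational linear subspace and k = lcm-circuit imbalance κ̇_W. Then for every integer vector d ∈ Z^n, every vertex of the polyhedron {x ∈ R^n : x ∈ W + d, x ≥ 0} is 1/k-integral; moreover κ̇_W is the smallest positive integer k with this property. -/
open Finset

variable {ι : Type*} [Fintype ι] [DecidableEq ι]

/-!
A point `x` of `P_d = {x ∈ W + d, x ≥ 0}` is a vertex iff its zero coordinates determine the
elements of `W`. Take a minimal determining set `T` of zero coordinates of a vertex. For `t ∈ T`
some nonzero vector of `W` vanishes on `T \ {t}`; it is elementary, and since linear independence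
over `ℚ` survives base change to `ℝ`, it may be taken to be a primitive integer vector `g`. As
`g t ∣ κ̇_W`, the vector `g / g t` is `1/κ̇_W`-integral, and `x = d - ∑_{t ∈ T} d t • g / g t`.

Conversely, for a primitive integer elementary vector `g` with `g i ≠ 0`, the fractional part of
`g / g i` is a vertex of `P_d` for `d = -⌊g / g i⌋`. If it is `1/k`-integral then `g i ∣ k * g j`
for all `j`, hence `g i ∣ k` because the entries of `g` are coprime. Finally `κ̇_W` exists: two
primitive integer elementary vectors with the same support agree up to sign, so there are only
finitely many.
-/

open Filter Topology

section
variable {σ : Type*}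

def IsDeterminedBy (W : Submodule ℝ (σ → ℝ)) (T : Set σ) : Prop :=
  ∀ w ∈ W, (∀ j ∈ T, w j = 0) → w = 0

namespace IsDeterminedBy

variable {W : Submodule ℝ (σ → ℝ)} {T : Set σ} {t : σ} {v w : σ → ℝ}

theorem apply_ne_zero (hW : IsDeterminedBy W (insert t T)) (hw : w ∈ W) (hw0 : w ≠ 0)
    (hwT : ∀ j ∈ T, w j = 0) : w t ≠ 0 := fun hwt =>
  hw0 <| hW w hw <| by simpa [hwt] using hwT

theorem smul_eq_smul (hW : IsDeterminedBy W (insert t T)) (hv : v ∈ W) (hw : w ∈ W)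
    (hvT : ∀ j ∈ T, v j = 0) (hwT : ∀ j ∈ T, w j = 0) : w t • v = v t • w := by
  refine sub_eq_zero.1 <| hW _ (W.sub_mem (W.smul_mem _ hv) (W.smul_mem _ hw)) ?_
  rintro j (rfl | hj)
  · simp [mul_comm]
  · simp [hvT j hj, hwT j hj]

theorem isElementary (hW : IsDeterminedBy W (insert t T)) (hw : w ∈ W) (hw0 : w ≠ 0)
    (hwT : ∀ j ∈ T, w j = 0) : IsElementary W w := by
  refine ⟨hw, hw0, fun h hh hh0 hsub => hsub.antisymm fun j hj => ?_⟩
  have hhT : ∀ j ∈ T, h j = 0 := fun j hjT => by_contra fun hj => hsub hj (hwT j hjT)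
  have hprop := congrFun (hW.smul_eq_smul hw hh hwT hhT) j
  have hht := hW.apply_ne_zero hh hh0 hhT
  simp only [Pi.smul_apply, smul_eq_mul] at hprop
  intro hhj
  exact mul_ne_zero hht hj (hprop.trans (by simp [hhj]))

theorem eq_sum [DecidableEq σ] {T : Finset σ} (hT : IsDeterminedBy W T) {g : σ → σ → ℝ}
    (hg : ∀ t ∈ T, g t ∈ W) (hgt : ∀ t ∈ T, g t t = 1)
    (hg0 : ∀ t ∈ T, ∀ s ∈ T, s ≠ t → g t s = 0) (hw : w ∈ W) :
    w = ∑ t ∈ T, w t • g t := by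
  refine sub_eq_zero.1 <| hT _ (W.sub_mem hw (W.sum_mem fun t ht => W.smul_mem _ (hg t ht))) ?_
  intro s hs
  rw [Pi.sub_apply, Finset.sum_apply, Finset.sum_eq_single_of_mem s hs
    fun t ht hts => by simp [hg0 t ht s hs hts.symm]]
  simp [hgt s hs]

theorem exists_minimal [Finite σ] [DecidableEq σ] {Z : Set σ} (hZ : IsDeterminedBy W Z) :
    ∃ T : Finset σ, ↑T ⊆ Z ∧ IsDeterminedBy W T ∧ ∀ t ∈ T, ¬ IsDeterminedBy W ↑(T.erase t) := by
  obtain ⟨T, ⟨hTZ, hT⟩, hmin⟩ := Set.Finite.exists_minimal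
    (s := {T : Finset σ | ↑T ⊆ Z ∧ IsDeterminedBy W T}) (Set.toFinite _)
    ⟨Z.toFinite.toFinset, by simpa using hZ⟩
  refine ⟨T, hTZ, hT, fun t ht hTt => ?_⟩
  have := hmin ⟨(Finset.coe_subset.2 (T.erase_subset t)).trans hTZ, hTt⟩ (T.erase_subset t)
  exact Finset.notMem_erase t T (this ht)

end IsDeterminedBy

theorem IsElementary.eq_zero_of_support_subset_s6 {W : Submodule ℝ (σ → ℝ)} {g h : σ → ℝ} {i : σ}
    (hg : IsElementary W g) (hh : h ∈ W) (hsub : {j | h j ≠ 0} ⊆ {j | g j ≠ 0})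
    (hgi : g i ≠ 0) (hhi : h i = 0) : h = 0 :=
  by_contra fun hh0 => (hg.2.2 h hh hh0 hsub ▸ hgi : i ∈ {j | h j ≠ 0}) hhi

theorem mem_extremePoints_iff_isDeterminedBy [Finite σ] {W : Submodule ℝ (σ → ℝ)} {a x : σ → ℝ} :
    x ∈ Set.extremePoints ℝ {x : σ → ℝ | x - a ∈ W ∧ ∀ i, 0 ≤ x i} ↔
      (x - a ∈ W ∧ ∀ i, 0 ≤ x i) ∧ IsDeterminedBy W {j | x j = 0} := by
  rw [mem_extremePoints]
  refine and_congr_right fun ⟨hxW, hx0⟩ => ⟨fun hext w hw hwx => ?_, fun hdet => ?_⟩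
  · have hnear : ∀ᶠ ε in 𝓝 (0 : ℝ), ∀ j, 0 ≤ x j + ε * w j := by
      refine eventually_all.2 fun j => ?_
      rcases (hx0 j).eq_or_lt with hj | hj
      · simp [← hj, hwx j hj.symm]
      · have hcont : Continuous fun ε : ℝ => x j + ε * w j := by fun_prop
        exact (hcont.tendsto 0).eventually (eventually_ge_nhds (by simpa using hj))
    obtain ⟨δ, hδ, hball⟩ := Metric.eventually_nhds_iff.1 hnear
    have hmem : ∀ ε : ℝ, |ε| < δ → x + ε • w ∈ {x : σ → ℝ | x - a ∈ W ∧ ∀ i, 0 ≤ x i} :=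
      fun ε hε => ⟨by simpa [add_sub_right_comm] using W.add_mem hxW (W.smul_mem ε hw),
        hball (by simpa using hε)⟩
    have hδ2 : |δ / 2| < δ := by rw [abs_of_pos (half_pos hδ)]; exact half_lt_self hδ
    have hseg : x ∈ openSegment ℝ (x + (δ / 2) • w) (x + (-(δ / 2)) • w) :=
      ⟨1 / 2, 1 / 2, by norm_num, by norm_num, by norm_num, by ext; simp; ring⟩
    have := (hext _ (hmem _ hδ2) _ (hmem _ (by rwa [abs_neg])) hseg).1
    simpa [hδ.ne'] using this
  · rintro y ⟨hyW, hy0⟩ z ⟨hzW, hz0⟩ ⟨b, c, hb, hc, hbc, rfl⟩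
    have hyz : y = z := by
      refine sub_eq_zero.1 <| hdet _ (by simpa using W.sub_mem hyW hzW) fun j hj => ?_
      simp only [Set.mem_ofPred_eq, Pi.add_apply, Pi.smul_apply, smul_eq_mul] at hj
      have : y j = 0 := by nlinarith [hy0 j, hz0 j]
      have : z j = 0 := by nlinarith [hy0 j, hz0 j]
      simp [*]
    subst hyz
    simp [← add_smul, hbc]

theorem ratCast_mem_span {S : Set (σ → ℚ)} {v : σ → ℚ} (hv : v ∈ Submodule.span ℚ S) :
    (fun i => (v i : ℝ)) ∈ Submodule.span ℝ ((fun v : σ → ℚ => fun i => (v i : ℝ)) '' S) :=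
  Submodule.span_le_restrictScalars ℚ ℝ _ <| by
    have := Submodule.mem_map_of_mem (f := (Algebra.linearMap ℚ ℝ).compLeft σ) hv
    rwa [Submodule.map_span] at this

end

section
variable {σ : Type*} [Fintype σ] {W : Submodule ℝ (σ → ℝ)}

theorem exists_primitive_int_smul {q : σ → ℚ} (hq : q ≠ 0) :
    ∃ c : ℚ, c ≠ 0 ∧ ∃ g : σ → ℤ, (∀ i, (g i : ℚ) = c * q i) ∧
      univ.gcd (fun i => (g i).natAbs) = 1 := by
  obtain ⟨⟨b, hb⟩, hint⟩ := IsLocalization.exist_integer_multiples_of_finite (nonZeroDivisors ℤ) q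
  choose z hz using hint
  simp only [algebraMap_int_eq, eq_intCast, zsmul_eq_mul] at hz
  have hb0 : b ≠ 0 := nonZeroDivisors.ne_zero hb
  obtain ⟨i₀, hi₀⟩ := Function.ne_iff.1 hq
  have hzi₀ : (z i₀).natAbs ≠ 0 :=
    Int.natAbs_ne_zero.2 fun h => hi₀ (by simpa [h, hb0] using hz i₀)
  set G := univ.gcd fun i => (z i).natAbs
  have hG : G ≠ 0 := fun h => hzi₀ (Finset.gcd_eq_zero_iff.1 h i₀ (mem_univ _))
  have hGz : ∀ i, (G : ℤ) ∣ z i := fun i => Int.natCast_dvd.2 (Finset.gcd_dvd (mem_univ i))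
  refine ⟨b / G, div_ne_zero (by exact_mod_cast hb0) (by exact_mod_cast hG),
    fun i => z i / G, fun i => ?_, ?_⟩
  · rw [Int.cast_div (hGz i) (by exact_mod_cast hG), hz i]
    push_cast; ring
  · have habs : ∀ i, (z i / G).natAbs = (z i).natAbs / G := fun i => by
      rw [Int.natAbs_ediv]; simp [hGz i]
    simp only [habs]
    exact Finset.gcd_div_eq_one (mem_univ i₀) hzi₀

theorem isDeterminedBy_span_ratCast {S : Set (σ → ℚ)} {T : Set σ}
    (hS : ∀ v ∈ Submodule.span ℚ S, (∀ j ∈ T, v j = 0) → v = 0) :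
    IsDeterminedBy (Submodule.span ℝ ((fun v : σ → ℚ => fun i => (v i : ℝ)) '' S)) T := by
  set V := Submodule.span ℚ S
  let toReal : (σ → ℚ) →ₗ[ℚ] (σ → ℝ) := (Algebra.linearMap ℚ ℝ).compLeft σ
  let b := Module.finBasis ℚ V
  let π : V →ₗ[ℚ] (T → ℚ) := (LinearMap.pi fun j : T => LinearMap.proj (j : σ)) ∘ₗ V.subtype
  have hπ : LinearMap.ker π = ⊥ := LinearMap.ker_eq_bot'.2 fun v hv =>
    Subtype.ext <| hS v v.2 fun j hj => congrFun hv ⟨j, hj⟩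
  have hli : LinearIndependent ℝ fun k => algebraMap ℚ ℝ ∘ π (b k) :=
    linearIndependent_algebraMap_comp_iff.2 (b.linearIndependent.map' π hπ)
  have hspan : Submodule.span ℝ (toReal '' S) ≤
      Submodule.span ℝ (Set.range fun k => toReal (b k)) := by
    refine Submodule.span_le.2 ?_
    rintro _ ⟨s, hs, rfl⟩
    change toReal (⟨s, Submodule.subset_span hs⟩ : V) ∈ _
    rw [← b.sum_repr ⟨s, Submodule.subset_span hs⟩]
    simp only [Submodule.coe_sum, Submodule.coe_smul, map_sum, map_smul]
    exact Submodule.sum_mem _ fun k _ =>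
      Submodule.smul_of_tower_mem _ _ (Submodule.subset_span ⟨k, rfl⟩)
  intro w hw hwT
  obtain ⟨c, rfl⟩ := (Submodule.mem_span_range_iff_exists_fun ℝ).1 (hspan hw)
  have hc := Fintype.linearIndependent_iff.1 hli c <| funext fun j => by
    simpa [Finset.sum_apply, π, toReal] using hwT j j.2
  simp [hc]

theorem exists_primitive_int_of_not_isDeterminedBy (hW : IsRationalSubspace W) {T : Set σ}
    (hT : ¬ IsDeterminedBy W T) :
    ∃ g : σ → ℤ, (fun i => (g i : ℝ)) ∈ W ∧ g ≠ 0 ∧ (∀ j ∈ T, g j = 0) ∧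
      univ.gcd (fun i => (g i).natAbs) = 1 := by
  obtain ⟨S, rfl⟩ := hW
  obtain ⟨v, hvS, hvT, hv0⟩ : ∃ v ∈ Submodule.span ℚ S, (∀ j ∈ T, v j = 0) ∧ v ≠ 0 := by
    by_contra! h
    exact hT (isDeterminedBy_span_ratCast h)
  obtain ⟨c, hc, g, hg, hgcd⟩ := exists_primitive_int_smul hv0
  have hgc : (fun i => (g i : ℝ)) = (c : ℝ) • fun i => (v i : ℝ) := funext fun i => by
    simpa using congrArg (Rat.cast : ℚ → ℝ) (hg i)
  refine ⟨g, hgc ▸ Submodule.smul_mem _ _ (ratCast_mem_span hvS), fun h => ?_, fun j hj => ?_, hgcd⟩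
  · exact hv0 (funext fun i => by simpa [h, hc] using (hg i).symm)
  · exact (Int.cast_eq_zero (α := ℚ)).1 (by rw [hg j, hvT j hj, mul_zero])

theorem IsIntElementary.eq_or_eq_neg {g h : σ → ℤ} (hg : IsIntElementary W g)
    (hh : IsIntElementary W h) (hsupp : {i | g i ≠ 0} = {i | h i ≠ 0}) : h = g ∨ h = -g := by
  obtain ⟨i₀, hi₀⟩ : ∃ i, g i ≠ 0 := by
    by_contra! h0
    exact hg.1.2.1 (funext fun i => by simp [h0 i])
  have hhg : ∀ i, g i = 0 → h i = 0 := fun i hgi => not_ne_iff.1 fun hhi =>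
    (hsupp.symm ▸ hhi : i ∈ {i | g i ≠ 0}) hgi
  have hkey : ∀ i, h i₀ * g i = g i₀ * h i := by
    have h0 := hg.1.eq_zero_of_support_subset_s6 (i := i₀)
      (W.sub_mem (W.smul_mem (h i₀ : ℝ) hg.1.1) (W.smul_mem (g i₀ : ℝ) hh.1.1))
      (fun j hj hgj => hj (by simp [Int.cast_eq_zero.1 hgj, hhg j (Int.cast_eq_zero.1 hgj)]))
      (by exact_mod_cast hi₀) (by simp [mul_comm])
    intro i
    have h1 : (h i₀ : ℝ) * g i - g i₀ * h i = 0 := by simpa using congrFun h0 i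
    exact_mod_cast sub_eq_zero.1 h1
  have habs : (h i₀).natAbs = (g i₀).natAbs := by
    have : univ.gcd (fun i => (h i₀).natAbs * (g i).natAbs) =
        univ.gcd (fun i => (g i₀).natAbs * (h i).natAbs) := Finset.gcd_congr rfl fun i _ => by
      simpa [Int.natAbs_mul] using congrArg Int.natAbs (hkey i)
    simpa [Finset.gcd_mul_left, hg.2, hh.2] using this
  rcases Int.natAbs_eq_natAbs_iff.1 habs with he | he
  · exact .inl (funext fun i => (mul_left_cancel₀ hi₀ (he ▸ hkey i)).symm)
  · exact .inr (funext fun i => (mul_left_cancel₀ hi₀ (by simpa [he] using (hkey i).symm)))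

variable (W) in
theorem finite_setOf_isIntElementary : {g : σ → ℤ | IsIntElementary W g}.Finite := by
  refine Set.Finite.of_finite_fibers (fun g : σ → ℤ => {i | g i ≠ 0}) (Set.toFinite _) ?_
  rintro _ ⟨g₀, hg₀, rfl⟩
  refine (Set.toFinite {g₀, -g₀}).subset ?_
  rintro h ⟨hh, hs⟩
  exact hg₀.eq_or_eq_neg hh hs.symm

variable (W) in
theorem dotKappa_mem : dotKappa W ∈
    {k : ℕ | 0 < k ∧ ∀ g : σ → ℤ, IsIntElementary W g → ∀ i, g i ≠ 0 → (g i).natAbs ∣ k} := by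
  refine Nat.sInf_mem ⟨∏ g ∈ (finite_setOf_isIntElementary W).toFinset, ∏ i, max (g i).natAbs 1,
    Finset.prod_pos fun _ _ => Finset.prod_pos fun _ _ => by positivity, fun g hg i hgi => ?_⟩
  calc (g i).natAbs = max (g i).natAbs 1 := (max_eq_left (Int.natAbs_pos.2 hgi)).symm
    _ ∣ ∏ i, max (g i).natAbs 1 := Finset.dvd_prod_of_mem _ (mem_univ i)
    _ ∣ _ := Finset.dvd_prod_of_mem (fun g : σ → ℤ => ∏ i, max (g i).natAbs 1) (by simpa using hg)

theorem IsElementary.fract_mem_extremePoints {g : σ → ℝ} {i : σ} (hg : IsElementary W g)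
    (hgi : g i ≠ 0) :
    (fun j => Int.fract (g j / g i)) ∈ Set.extremePoints ℝ
      {x : σ → ℝ | x - (fun j => ((-⌊g j / g i⌋ : ℤ) : ℝ)) ∈ W ∧ ∀ j, 0 ≤ x j} := by
  have hv : (fun j => Int.fract (g j / g i)) - (fun j => ((-⌊g j / g i⌋ : ℤ) : ℝ)) =
      (g i)⁻¹ • g := by
    ext j
    simp only [Pi.sub_apply, Pi.smul_apply, smul_eq_mul, Int.cast_neg, Int.fract]
    ring
  rw [mem_extremePoints_iff_isDeterminedBy, hv]
  refine ⟨⟨W.smul_mem _ hg.1, fun j => Int.fract_nonneg _⟩, fun w hw hwx =>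
    hg.eq_zero_of_support_subset_s6 hw (fun j hj hgj => hj (hwx j ?_)) hgi (hwx i (by simp [hgi]))⟩
  simp [hgj]

theorem natAbs_dvd_of_forall_extremePoints {k : ℕ} (hk : 0 < k)
    (hfrac : ∀ d : σ → ℤ, ∀ x ∈ Set.extremePoints ℝ
      {x : σ → ℝ | (x - fun i => ((d i : ℝ))) ∈ W ∧ ∀ i, 0 ≤ x i},
      ∀ i, ∃ z : ℤ, x i = (z : ℝ) / (k : ℝ))
    {g : σ → ℤ} (hg : IsIntElementary W g) {i : σ} (hgi : g i ≠ 0) : (g i).natAbs ∣ k := by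
  have hgiR : (g i : ℝ) ≠ 0 := by exact_mod_cast hgi
  have hdvd : ∀ j, g i ∣ k * g j := fun j => by
    obtain ⟨z, hz⟩ := hfrac (fun j => -⌊(g j : ℝ) / g i⌋) _ (hg.1.fract_mem_extremePoints hgiR) j
    set f := ⌊(g j : ℝ) / g i⌋
    have hsplit : (g j : ℝ) / g i = f + z / k := by rw [← hz, Int.floor_add_fract]
    refine ⟨k * f + z, ?_⟩
    have : ((k * g j : ℤ) : ℝ) = ((g i * (k * f + z) : ℤ) : ℝ) := by
      rw [div_eq_iff hgiR] at hsplit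
      push_cast
      rw [hsplit]
      field_simp
    exact_mod_cast this
  have := Finset.dvd_gcd (s := univ) fun j _ => Int.natAbs_dvd_natAbs.2 (hdvd j)
  simpa [Int.natAbs_mul, Finset.gcd_mul_left, hg.2] using this

theorem exists_mem_apply_eq_one_of_not_isDeterminedBy (hW : IsRationalSubspace W) {k : ℕ}
    (hk : ∀ g, IsIntElementary W g → ∀ i, g i ≠ 0 → (g i).natAbs ∣ k) {T : Set σ} {t : σ}
    (hins : IsDeterminedBy W (insert t T)) (hT : ¬ IsDeterminedBy W T) :
    ∃ g ∈ W, g t = 1 ∧ (∀ j ∈ T, g j = 0) ∧ ∀ j, ∃ z : ℤ, k * g j = z := by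
  obtain ⟨g, hgW, hg0, hgT, hgcd⟩ := exists_primitive_int_of_not_isDeterminedBy hW hT
  have hgR0 : (fun i => (g i : ℝ)) ≠ 0 := fun h => hg0 (funext fun i => by
    simpa using congrFun h i)
  have hgTR : ∀ j ∈ T, (g j : ℝ) = 0 := fun j hj => by simp [hgT j hj]
  have hgt : (g t : ℝ) ≠ 0 := hins.apply_ne_zero hgW hgR0 hgTR
  obtain ⟨m, hm⟩ := Int.natAbs_dvd.1 <| Int.natCast_dvd_natCast.2 <|
    hk g ⟨hins.isElementary hgW hgR0 hgTR, hgcd⟩ t (by exact_mod_cast hgt)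
  have hkR : (k : ℝ) = g t * m := by exact_mod_cast hm
  refine ⟨(g t : ℝ)⁻¹ • fun i => (g i : ℝ), W.smul_mem _ hgW, inv_mul_cancel₀ hgt,
    fun j hj => by simp [hgT j hj], fun j => ⟨m * g j, ?_⟩⟩
  simp only [Pi.smul_apply, smul_eq_mul, hkR]
  push_cast
  field_simp

theorem exists_eq_intCast_div_of_mem_extremePoints [DecidableEq σ] (hW : IsRationalSubspace W)
    {k : ℕ} (hk0 : 0 < k) (hk : ∀ g, IsIntElementary W g → ∀ i, g i ≠ 0 → (g i).natAbs ∣ k)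
    {d : σ → ℤ} {x : σ → ℝ}
    (hx : x ∈ Set.extremePoints ℝ {x : σ → ℝ | (x - fun i => ((d i : ℝ))) ∈ W ∧ ∀ i, 0 ≤ x i})
    (i : σ) : ∃ z : ℤ, x i = (z : ℝ) / (k : ℝ) := by
  obtain ⟨⟨hxW, -⟩, hZ⟩ := mem_extremePoints_iff_isDeterminedBy.1 hx
  obtain ⟨T, hTZ, hT, hTmin⟩ := hZ.exists_minimal
  have hbasis : ∀ t ∈ T, ∃ g ∈ W, g t = 1 ∧ (∀ s ∈ T, s ≠ t → g s = 0) ∧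
      ∀ j, ∃ z : ℤ, k * g j = z := fun t ht => by
    have hins : IsDeterminedBy W (insert t ↑(T.erase t)) := by
      rwa [← Finset.coe_insert, Finset.insert_erase ht]
    obtain ⟨g, hgW, hgt, hg0, hgk⟩ :=
      exists_mem_apply_eq_one_of_not_isDeterminedBy hW hk hins (hTmin t ht)
    exact ⟨g, hgW, hgt, fun s hs hst => hg0 s (by simp [hs, hst]), hgk⟩
  choose! g hgW hgt hg0 hgk using hbasis
  choose! z hz using hgk
  have hxi : x i = d i + ∑ t ∈ T, -(d t : ℝ) * g t i := by
    have := congrFun (hT.eq_sum hgW hgt hg0 hxW) i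
    simp only [Pi.sub_apply, Finset.sum_apply, Pi.smul_apply, smul_eq_mul] at this
    rw [Finset.sum_congr rfl fun t ht => by rw [(hTZ ht : x t = 0), zero_sub]] at this
    linarith
  refine ⟨k * d i + ∑ t ∈ T, -d t * z t i, ?_⟩
  rw [eq_div_iff (by positivity), hxi, add_mul, Finset.sum_mul,
    Finset.sum_congr rfl fun t ht => by rw [mul_assoc, mul_comm (g t i), hz t ht i]]
  push_cast
  ring

end

/-- `κ̇_W` is the smallest positive integer `k` such that, for every integer
vector `d`, every vertex (extreme point) of `{x : x ∈ W + d, x ≥ 0}` is `1/k`-integral. -/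
theorem dotKappa_least_fractionality {n : ℕ} (W : Submodule ℝ (Fin n → ℝ))
    (hrat : IsRationalSubspace W) :
    IsLeast {k : ℕ | 0 < k ∧ ∀ d : Fin n → ℤ,
        ∀ x ∈ Set.extremePoints ℝ
          {x : Fin n → ℝ | (x - fun i => ((d i : ℝ))) ∈ W ∧ ∀ i, 0 ≤ x i},
        ∀ i, ∃ z : ℤ, x i = (z : ℝ) / (k : ℝ)}
      (dotKappa W) := by
  obtain ⟨hpos, hdvd⟩ := dotKappa_mem W
  exact ⟨⟨hpos, fun d x hx => exists_eq_intCast_div_of_mem_extremePoints hrat hpos hdvd hx⟩,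
    fun k ⟨hk, hfrac⟩ => Nat.sInf_le ⟨hk, fun g hg i hgi =>
      natAbs_dvd_of_forall_extremePoints hk hfrac hg hgi⟩⟩
end

section
/- For any linear subspace W ⊆ R^n, the circuit imbalances of W and its orthogonal complement are equal: κ_W = κ_{W^⊥}. -/
/-!
Let `g` be an elementary vector of `W` and `i ≠ j` two indices of its support. The unit vector
`e_i` is not in `W + span {e_k | k ∈ supp g \ {i, j}}`: otherwise `W` would contain a nonzero
vector supported in `supp g \ {j}`, against the minimality of `supp g`. Since `W^⊥⊥ = W`, some
`h ∈ W^⊥` has `h_i ≠ 0` and vanishes on `supp g \ {i, j}`, and eliminating coordinates turns it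
into an elementary vector of `W^⊥` with the same two properties. Orthogonality to `g` now reads
`h_i g_i + h_j g_j = 0`, so `|g_j / g_i| = |h_i / h_j|`. Hence `W` and `W^⊥` have the same set of
imbalance ratios, and their suprema agree whether or not that set is bounded.
-/

open Finset

variable {ι : Type*} [Fintype ι] [DecidableEq ι]

open Function

section

variable {ι : Type*}

theorem support_sub_smul_ssubset {K : Type*} [Field K] {f g : ι → K}
    (hgf : support g ⊆ support f) {m : ι} (hm : g m ≠ 0) :
    support (f - (f m / g m) • g) ⊂ support f := by
  have hsub : support (f - (f m / g m) • g) ⊆ support f := by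
    refine support_subset_iff'.mpr fun k hk => ?_
    simp [notMem_support.mp hk, notMem_support.mp fun h => hk (hgf h)]
  refine (Set.ssubset_iff_of_subset hsub).mpr ⟨m, hgf hm, ?_⟩
  simp [field]

theorem exists_isElementary_support_subset [Finite ι] {V : Submodule ℝ (ι → ℝ)} {h : ι → ℝ}
    (hV : h ∈ V) {i : ι} (hi : h i ≠ 0) :
    ∃ e, IsElementary V e ∧ e i ≠ 0 ∧ support e ⊆ support h := by
  induction hcard : (support h).ncard using Nat.strong_induction_on generalizing h with
  | _ N ih =>
  by_cases helem : IsElementary V h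
  · exact ⟨h, helem, hi, subset_rfl⟩
  obtain ⟨h', hV', hne', hsub, hne⟩ :
      ∃ h' ∈ V, h' ≠ 0 ∧ support h' ⊆ support h ∧ support h' ≠ support h := by
    have h0 : h ≠ 0 := fun h0 => hi (by simp [h0])
    simpa [IsElementary, hV, h0, support] using helem
  obtain ⟨h₁, hV₁, hi₁, hlt⟩ : ∃ h₁ ∈ V, h₁ i ≠ 0 ∧ support h₁ ⊂ support h := by
    by_cases hi' : h' i = 0
    · obtain ⟨m, hm⟩ := Function.ne_iff.mp hne'
      exact ⟨h - (h m / h' m) • h', sub_mem hV (V.smul_mem _ hV'), by simp [hi', hi],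
        support_sub_smul_ssubset hsub hm⟩
    · exact ⟨h', hV', hi', hsub.ssubset_of_ne hne⟩
  obtain ⟨e, he, hei, hsub'⟩ := ih _ (hcard ▸ Set.ncard_lt_ncard hlt) hV₁ hi₁ rfl
  exact ⟨e, he, hei, hsub'.trans hlt.subset⟩

variable [Fintype ι]

theorem mem_orthComp {W : Submodule ℝ (ι → ℝ)} {v : ι → ℝ} :
    v ∈ orthComp W ↔ ∀ w ∈ W, v ⬝ᵥ w = 0 := Iff.rfl

theorem orthComp_antitone {U V : Submodule ℝ (ι → ℝ)} (hUV : U ≤ V) :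
    orthComp V ≤ orthComp U :=
  fun _ hv w hw => hv w (hUV hw)

theorem orthComp_eq_map_orthogonal (W : Submodule ℝ (ι → ℝ)) :
    orthComp W = ((W.comap (WithLp.linearEquiv 2 ℝ (ι → ℝ)).toLinearMap)ᗮ).map
      (WithLp.linearEquiv 2 ℝ (ι → ℝ)).toLinearMap := by
  ext v
  rw [Submodule.map_equiv_eq_comap_symm]
  simp only [Submodule.mem_comap, Submodule.mem_orthogonal, mem_orthComp]
  constructor
  · intro h u hu
    rw [EuclideanSpace.inner_eq_star_dotProduct]
    simpa [dotProduct_comm] using h _ hu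
  · intro h w hw
    have := h (WithLp.toLp 2 w) hw
    rw [EuclideanSpace.inner_eq_star_dotProduct] at this
    simpa [dotProduct_comm] using this

theorem orthComp_orthComp (W : Submodule ℝ (ι → ℝ)) : orthComp (orthComp W) = W := by
  rw [orthComp_eq_map_orthogonal, orthComp_eq_map_orthogonal,
    Submodule.comap_map_eq_of_injective (WithLp.linearEquiv 2 ℝ (ι → ℝ)).injective,
    Submodule.orthogonal_orthogonal,
    Submodule.map_comap_eq_of_surjective (WithLp.linearEquiv 2 ℝ (ι → ℝ)).surjective]

theorem exists_mem_orthComp_dotProduct_ne_zero {U : Submodule ℝ (ι → ℝ)} {v : ι → ℝ}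
    (hv : v ∉ U) : ∃ h ∈ orthComp U, h ⬝ᵥ v ≠ 0 := by
  by_contra! hcon
  exact hv ((orthComp_orthComp U).le fun w hw => (dotProduct_comm v w).trans (hcon w hw))

theorem IsElementary.exists_mem_orthComp_support_inter_subset {W : Submodule ℝ (ι → ℝ)}
    {g : ι → ℝ} (hg : IsElementary W g) {i j : ι} (hij : i ≠ j) (hi : g i ≠ 0) (hj : g j ≠ 0) :
    ∃ h ∈ orthComp W, h i ≠ 0 ∧ support h ∩ support g ⊆ {i, j} := by
  classical
  set Z : Submodule ℝ (ι → ℝ) := Submodule.pi (support g \ {i, j})ᶜ fun _ => ⊥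
  have hZ : ∀ z ∈ Z, ∀ k ∉ support g \ {i, j}, z k = 0 := fun z hz => Submodule.mem_pi.mp hz
  have hnot : Pi.single i 1 ∉ W ⊔ Z := by
    intro hmem
    obtain ⟨y, hy, z, hz, hyz⟩ := Submodule.mem_sup.mp hmem
    have hy_eq : y = Pi.single i 1 - z := eq_sub_of_add_eq hyz
    have hyi : y i = 1 := by simp [hy_eq, hZ z hz i (by simp)]
    have hyj : y j = 0 := by simp [hy_eq, hZ z hz j (by simp), hij.symm]
    have hsupp : support y ⊆ support g := by
      refine support_subset_iff'.mpr fun k hk => ?_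
      have hki : k ≠ i := fun h => hk (h ▸ hi)
      simp [hy_eq, hZ z hz k fun h => hk h.1, hki]
    have hy0 : y ≠ 0 := fun h0 => by simp [h0] at hyi
    exact (Set.ext_iff.mp (hg.2.2 y hy hy0 hsupp) j).mpr hj hyj
  obtain ⟨h, hU, hhi⟩ := exists_mem_orthComp_dotProduct_ne_zero hnot
  refine ⟨h, orthComp_antitone le_sup_left hU, by simpa using hhi, ?_⟩
  rintro k ⟨hk, hgk⟩
  by_contra hkij
  have hsingle : Pi.single k 1 ∈ Z := by
    refine Submodule.mem_pi.mpr fun l hl => ?_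
    have hlk : l ≠ k := fun h => hl (h ▸ ⟨hgk, hkij⟩)
    simp [hlk]
  exact hk (by simpa using mem_orthComp.mp hU _ (Submodule.mem_sup_right hsingle))

theorem IsElementary.exists_isElementary_orthComp_ratio_eq {W : Submodule ℝ (ι → ℝ)}
    {g : ι → ℝ} (hg : IsElementary W g) {i j : ι} (hij : i ≠ j) (hi : g i ≠ 0) (hj : g j ≠ 0) :
    ∃ h, IsElementary (orthComp W) h ∧ h i ≠ 0 ∧ h j ≠ 0 ∧ |g j| / |g i| = |h i| / |h j| := by
  obtain ⟨h₀, hW₀, hi₀, hsupp₀⟩ := hg.exists_mem_orthComp_support_inter_subset hij hi hj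
  obtain ⟨h, hh, hhi, hsub⟩ := exists_isElementary_support_subset hW₀ hi₀
  have horth : h i * g i + h j * g j = 0 := by
    rw [← Fintype.sum_eq_add (f := fun k => h k * g k) i j hij fun k hk => ?_]
    · exact hh.1 g hg.1
    · by_contra hk0
      rcases hsupp₀ ⟨hsub (left_ne_zero_of_mul hk0), right_ne_zero_of_mul hk0⟩ with rfl | rfl
      exacts [hk.1 rfl, hk.2 rfl]
  have hhj : h j ≠ 0 := fun h0 => mul_ne_zero hhi hi (by simpa [h0] using horth)
  refine ⟨h, hh, hhi, hhj, ?_⟩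
  have habs := congrArg abs (eq_neg_of_add_eq_zero_left horth)
  rw [abs_neg, abs_mul, abs_mul] at habs
  rw [div_eq_div_iff (abs_ne_zero.2 hi) (abs_ne_zero.2 hhj)]
  linear_combination -habs

end

section

variable {ι : Type*}

def imbalanceRatios (W : Submodule ℝ (ι → ℝ)) : Set ℝ :=
  {t | ∃ g, IsElementary W g ∧ ∃ i j, g i ≠ 0 ∧ g j ≠ 0 ∧ t = |g j| / |g i|}

theorem kappa_eq_sSup (W : Submodule ℝ (ι → ℝ)) :
    kappa W = sSup ({1} ∪ imbalanceRatios W) := rfl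

variable [Fintype ι]

theorem one_union_imbalanceRatios_subset_orthComp (W : Submodule ℝ (ι → ℝ)) :
    {1} ∪ imbalanceRatios W ⊆ {1} ∪ imbalanceRatios (orthComp W) := by
  rintro t (ht | ⟨g, hg, i, j, hi, hj, rfl⟩)
  · exact Or.inl ht
  rcases eq_or_ne i j with rfl | hij
  · exact Or.inl (div_self (abs_ne_zero.2 hi))
  obtain ⟨h, hh, hhi, hhj, heq⟩ := hg.exists_isElementary_orthComp_ratio_eq hij hi hj
  exact Or.inr ⟨h, hh, j, i, hhj, hhi, heq⟩

theorem one_union_imbalanceRatios_orthComp (W : Submodule ℝ (ι → ℝ)) :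
    {1} ∪ imbalanceRatios (orthComp W) = {1} ∪ imbalanceRatios W := by
  refine subset_antisymm ?_ (one_union_imbalanceRatios_subset_orthComp W)
  simpa only [orthComp_orthComp] using one_union_imbalanceRatios_subset_orthComp (orthComp W)

end

/-- the circuit imbalance is self-dual: `κ_W = κ_{W^⊥}`. -/
theorem kappa_self_dual {n : ℕ} (W : Submodule ℝ (Fin n → ℝ)) :
    kappa W = kappa (orthComp W) := by
  rw [kappa_eq_sSup, kappa_eq_sSup, one_union_imbalanceRatios_orthComp]
end

section
/- Let A ∈ R^{m×n} be in basis form A = (I_m | A') with W = ker(A), and let W^⊥ = span of the rows of A. Then the m rows of A are elementary vectors of W^⊥, and for any two rows A^i, A^j (i ≠ j ≤ m) and any column k > m, if the vector h = A_{jk} A^i − A_{ik} A^j is nonzero, then h is an elementary vector of W^⊥. -/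
open Finset

variable {ι : Type*} [Fintype ι] [DecidableEq ι]

section Aux

variable {m n' : ℕ}

lemma aux_row_mem (A : Matrix (Fin m) (Fin m ⊕ Fin n') ℝ) (i : Fin m) :
    A i ∈ orthComp (LinearMap.ker A.mulVecLin) := by
  intro w hw
  have h : A.mulVec w = 0 := hw
  have := congrFun h i
  simpa [Matrix.mulVec, dotProduct] using this

lemma aux_repr (A : Matrix (Fin m) (Fin m ⊕ Fin n') ℝ)
    (hbasis : ∀ i j : Fin m, A i (Sum.inl j) = if i = j then 1 else 0)
    {v : (Fin m ⊕ Fin n') → ℝ} (hv : v ∈ orthComp (LinearMap.ker A.mulVecLin)) :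
    ∀ l, v l = ∑ i, v (Sum.inl i) * A i l := by
  intro l
  cases l with
  | inl j =>
    simp [hbasis, mul_ite, Finset.sum_ite_eq']
  | inr k =>
    set e : (Fin m ⊕ Fin n') → ℝ :=
      Sum.elim (fun i => -A i (Sum.inr k)) (fun k' => if k' = k then 1 else 0) with he_def
    have he : e ∈ LinearMap.ker A.mulVecLin := by
      rw [LinearMap.mem_ker]
      show A.mulVec e = 0
      funext i
      show ∑ l, A i l * e l = 0
      rw [Fintype.sum_sum_type]
      simp [he_def, hbasis, ite_mul, mul_ite, Finset.sum_ite_eq', Finset.sum_ite_eq]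
    have h0 := hv e he
    rw [Fintype.sum_sum_type] at h0
    simp only [he_def, Sum.elim_inl, Sum.elim_inr, mul_ite, mul_one, mul_zero,
      Finset.sum_ite_eq', Finset.mem_univ, if_true, mul_neg] at h0
    have : v (Sum.inr k) = ∑ i, v (Sum.inl i) * A i (Sum.inr k) := by
      rw [Finset.sum_neg_distrib] at h0
      linarith [h0]
    exact this

end Aux

lemma supp_eq_of_scalar {ι : Type*} {c d : ℝ} (hc : c ≠ 0) (hd : d ≠ 0)
    {g h : ι → ℝ} (key : ∀ l, c * g l = d * h l) :
    {l | g l ≠ 0} = {l | h l ≠ 0} := by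
  ext l
  simp only [Set.mem_setOf_eq]
  have hkl := key l
  constructor
  · intro hl h0
    rw [h0, mul_zero] at hkl
    exact hl ((mul_eq_zero.mp hkl).resolve_left hc)
  · intro hl h0
    rw [h0, mul_zero] at hkl
    exact hl ((mul_eq_zero.mp hkl.symm).resolve_left hd)

/-- for `A = (I_m | A')` in basis form with `W = ker A`, the rows of `A` are
elementary vectors of `W^⊥`, and for rows `i ≠ j` and a column `k > m`, the vector
`h = A_{jk} A^i − A_{ik} A^j`, if nonzero, is an elementary vector of `W^⊥`. -/
theorem rows_elementary_of_basis_form {m n' : ℕ} (A : Matrix (Fin m) (Fin m ⊕ Fin n') ℝ)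
    (hbasis : ∀ i j : Fin m, A i (Sum.inl j) = if i = j then 1 else 0) :
    (∀ i : Fin m, IsElementary (orthComp (LinearMap.ker A.mulVecLin)) (A i)) ∧
    (∀ i j : Fin m, i ≠ j → ∀ k : Fin n',
      (fun l => A j (Sum.inr k) * A i l - A i (Sum.inr k) * A j l) ≠ 0 →
      IsElementary (orthComp (LinearMap.ker A.mulVecLin))
        (fun l => A j (Sum.inr k) * A i l - A i (Sum.inr k) * A j l)) := by
  constructor
  · intro i
    refine ⟨aux_row_mem A i, ?_, ?_⟩
    · intro h0
      have := congrFun h0 (Sum.inl i)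
      simp [hbasis] at this
    · intro h hh hne hsub
      -- h (inl j) = 0 for j ≠ i
      have hz : ∀ j : Fin m, j ≠ i → h (Sum.inl j) = 0 := by
        intro j hji
        by_contra hjz
        have := hsub hjz
        simp only [Set.mem_setOf_eq, hbasis, Ne.symm hji, if_false] at this
        exact this rfl
      have hrep := aux_repr A hbasis hh
      have hc : ∀ l, h l = h (Sum.inl i) * A i l := by
        intro l
        rw [hrep l]
        rw [Finset.sum_eq_single i]
        · intro b _ hb; rw [hz b hb, zero_mul]
        · intro hb; exact absurd (Finset.mem_univ i) hb
      have hci : h (Sum.inl i) ≠ 0 := by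
        intro h0
        apply hne
        funext l
        rw [hc l, h0, zero_mul]; rfl
      ext l
      simp only [Set.mem_setOf_eq, hc l]
      constructor
      · intro hl h0; exact hl (by rw [h0, mul_zero])
      · intro hl; exact mul_ne_zero hci hl
  · intro i j hij k hne
    set α := A i (Sum.inr k) with hα
    set β := A j (Sum.inr k) with hβ
    set h : (Fin m ⊕ Fin n') → ℝ := fun l => β * A i l - α * A j l with hh_def
    have hmem : h ∈ orthComp (LinearMap.ker A.mulVecLin) := by
      have : h = β • A i - α • A j := by funext l; simp [hh_def]
      rw [this]
      exact Submodule.sub_mem _ (Submodule.smul_mem _ _ (aux_row_mem A i))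
        (Submodule.smul_mem _ _ (aux_row_mem A j))
    refine ⟨hmem, hne, ?_⟩
    intro g hg gne hsub
    -- facts about h
    have hii : h (Sum.inl i) = β := by simp [hh_def, hbasis, hij, hij.symm]
    have hjj : h (Sum.inl j) = -α := by simp [hh_def, hbasis, hij, hij.symm]
    have hother : ∀ t : Fin m, t ≠ i → t ≠ j → h (Sum.inl t) = 0 := by
      intro t hti htj
      simp [hh_def, hbasis, Ne.symm hti, Ne.symm htj]
    have hk : h (Sum.inr k) = 0 := by simp [hh_def]; ring
    -- from support inclusion
    have gother : ∀ t : Fin m, t ≠ i → t ≠ j → g (Sum.inl t) = 0 := by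
      intro t hti htj
      by_contra h0
      exact (hsub h0) (by simp [Set.mem_setOf_eq, hother t hti htj]) |>.elim
    have gk : g (Sum.inr k) = 0 := by
      by_contra h0
      exact (hsub h0) hk
    set a := g (Sum.inl i) with ha
    set b := g (Sum.inl j) with hb
    have grep : ∀ l, g l = a * A i l + b * A j l := by
      intro l
      rw [aux_repr A hbasis hg l]
      rw [show (Finset.univ : Finset (Fin m)) = insert i (insert j (Finset.univ \ {i, j})) from ?_]
      · rw [Finset.sum_insert, Finset.sum_insert]
        · have : ∑ t ∈ Finset.univ \ {i, j}, g (Sum.inl t) * A t l = 0 := by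
            apply Finset.sum_eq_zero
            intro t ht
            simp only [Finset.mem_sdiff, Finset.mem_insert, Finset.mem_singleton] at ht
            rw [gother t (fun e => ht.2 (Or.inl e)) (fun e => ht.2 (Or.inr e)), zero_mul]
          rw [this, add_zero]
        · simp
        · simp [hij]
      · ext t
        simp only [Finset.mem_univ, Finset.mem_insert, Finset.mem_sdiff, true_iff]
        by_cases h1 : t = i
        · left; exact h1
        · by_cases h2 : t = j
          · right; left; exact h2
          · right; right; simp [h1, h2]
    have gkeq : a * α + b * β = 0 := by
      have := grep (Sum.inr k)
      rw [gk] at this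
      linarith [this]
    -- key scalar relations
    have key1 : ∀ l, β * g l = a * h l := by
      intro l
      rw [grep l]
      simp only [hh_def]
      linear_combination (A j l) * gkeq
    have key2 : ∀ l, α * g l = -b * h l := by
      intro l
      rw [grep l]
      simp only [hh_def]
      linear_combination (A i l) * gkeq
    by_cases hβ0 : β = 0
    · have hα0 : α ≠ 0 := by
        intro h0
        apply hne
        funext l
        simp [hh_def, hβ0, h0]
      have hb0 : (-b) ≠ 0 := by
        intro h0
        apply gne
        funext l
        have hkl := key2 l
        rw [h0, zero_mul] at hkl
        exact ((mul_eq_zero.mp hkl).resolve_left hα0)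
      exact supp_eq_of_scalar hα0 hb0 key2
    · have ha0 : a ≠ 0 := by
        intro h0
        apply gne
        funext l
        have hkl := key1 l
        rw [h0, zero_mul] at hkl
        exact ((mul_eq_zero.mp hkl).resolve_left hβ0)
      exact supp_eq_of_scalar hβ0 ha0 key1
end
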